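/- Let $(X_i)_{1\le i\le n}$ be a hidden Markov process on a countable observed state space $S$ whose underlying Markov chain has Doeblin contraction coefficients $\theta_k\le\theta<1$ for all $1\le k<n$. Let $f:S^n\to\mathbb R$ be 1-Lipschitz with respect to the normalized Hamming metric $d(x,y)=\tfrac1n\sum_{i=1}^n\mathbf 1[x_i\ne y_i]$. Then for all $t>0$, $\Pr[|f(X)-\mathbb E f(X)|>t]\le 2\exp\big(-\tfrac{n t^2 (1-\theta)^2}{2}\big)$. -/

import Mathlib

noncomputable section

attribute [local instance] Classical.propDecidable

/-- Value of a finite sequence at a natural-number position (0-indexed);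
`default` outside the range.  Coordinate `k` corresponds to the paper's index `k+1`. -/
def pad {α : Type*} [Inhabited α] {n : ℕ} (x : Fin n → α) (k : ℕ) : α :=
  if h : k < n then x ⟨k, h⟩ else default

/-- Markov measure on `S̄ⁿ` given by the initial law `p0` and transition kernels `p`:
`μ(x̄) = p0(x̄₁) ∏_{k=1}^{n-1} p_k(x̄_{k+1} | x̄_k)`, where `p k v u = p_k(v | u)`
and coordinate `k` (0-indexed) of `xb` is the paper's `x̄_{k+1}`. -/
def markovMeasure {Sb : Type*} [Inhabited Sb] (n : ℕ) (p0 : Sb → ℝ) (p : ℕ → Sb → Sb → ℝ)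
    (xb : Fin n → Sb) : ℝ :=
  p0 (pad xb 0) * ∏ k ∈ Finset.range (n - 1), p (k + 1) (pad xb (k + 1)) (pad xb k)

/-- The hidden Markov (observed) measure `ρ` on `Sⁿ`:
`ρ(x) = ∑_{x̄} μ(x̄) ∏_{ℓ=1}^n q_ℓ(x_ℓ | x̄_ℓ)`, where `q ℓ a v = q_ℓ(a | v)`. -/
def hmmMeasure {Sb S : Type*} [Inhabited Sb] [Inhabited S] [Countable Sb] (n : ℕ)
    (p0 : Sb → ℝ) (p : ℕ → Sb → Sb → ℝ) (q : ℕ → S → Sb → ℝ) (x : Fin n → S) : ℝ :=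
  ∑' xb : Fin n → Sb,
    markovMeasure n p0 p xb * ∏ l ∈ Finset.range n, q (l + 1) (pad x l) (pad xb l)

/-- Doeblin contraction coefficient of a transition kernel `pk` (with `pk v u = p(v | u)`):
`θ = sup_{u,u'} ‖p(·|u) - p(·|u')‖_TV`. -/
def doeblinCoeff {Sb : Type*} (pk : Sb → Sb → ℝ) : ℝ :=
  ⨆ (u : Sb) (u' : Sb), (1 / 2) * ∑' v, |pk v u - pk v u'|

namespace HMMAux

/-- Pairing equivalence splitting off the first coordinate. -/
def consE (α : Type*) (m : ℕ) : α × (Fin m → α) ≃ (Fin (m + 1) → α) where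
  toFun p := Fin.cons p.1 p.2
  invFun x := (x 0, Fin.tail x)
  left_inv p := by simp
  right_inv x := Fin.cons_self_tail x

lemma summable_consE_iff {α : Type*} {m : ℕ} (F : (Fin (m + 1) → α) → ℝ) :
    Summable F ↔ Summable (fun p : α × (Fin m → α) => F (Fin.cons p.1 p.2)) := by
  rw [← (consE α m).summable_iff (f := F)]
  rfl

lemma summable_pair_of_nonneg {α β : Type*} {G : α → β → ℝ}
    (h0 : ∀ a b, 0 ≤ G a b) (h1 : ∀ a, Summable (G a))
    (h2 : Summable fun a => ∑' b, G a b) :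
    Summable (fun p : α × β => G p.1 p.2) :=
  (summable_prod_of_nonneg (fun p => h0 p.1 p.2)).2 ⟨h1, h2⟩

lemma tsum_consE {α : Type*} {m : ℕ} (F : (Fin (m + 1) → α) → ℝ)
    (hs : Summable fun p : α × (Fin m → α) => F (Fin.cons p.1 p.2)) :
    ∑' x, F x = ∑' a, ∑' y, F (Fin.cons a y) := by
  calc ∑' x, F x = ∑' p : α × (Fin m → α), F (Fin.cons p.1 p.2) := by
        rw [← (consE α m).tsum_eq F]; rfl
  _ = ∑' a, ∑' y, F (Fin.cons a y) := Summable.tsum_prod' hs fun a => hs.prod_factor a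

lemma tsum_swap_abs {α β : Type*} (f : α → β → ℝ)
    (hjoint : Summable fun p : α × β => |f p.1 p.2|) :
    ∑' b, ∑' a, f a b = ∑' a, ∑' b, f a b :=
  Summable.tsum_comm' hjoint.of_abs (fun a => (hjoint.prod_factor a).of_abs)
    (fun b => ((hjoint.prod_symm).prod_factor b).of_abs)

def IsProb {α : Type*} (ν : α → ℝ) : Prop := (∀ u, 0 ≤ ν u) ∧ HasSum ν 1

def IsKer {α β : Type*} (K : ℕ → α → β → ℝ) : Prop :=
  ∀ k u, (∀ v, 0 ≤ K k v u) ∧ HasSum (fun v => K k v u) 1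

lemma IsKer.shift {α β : Type*} {K : ℕ → α → β → ℝ} (h : IsKer K) :
    IsKer (fun k => K (k + 1)) := fun k u => h (k + 1) u

variable {Sb S : Type*} [Inhabited Sb] [Inhabited S]

/-- Recursive definition of the hidden-Markov measure with initial hidden law `ν`. -/
def rho : (m : ℕ) → (ℕ → Sb → Sb → ℝ) → (ℕ → S → Sb → ℝ) → (Sb → ℝ) → (Fin m → S) → ℝ
  | 0, _, _, ν, _ => ∑' u, ν u
  | m + 1, P, Q, ν, x =>
      ∑' u, ν u * (Q 0 (x 0) u *
        rho m (fun k => P (k + 1)) (fun k => Q (k + 1)) (fun v => P 0 v u) (Fin.tail x))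

lemma rho_zero (P : ℕ → Sb → Sb → ℝ) (Q : ℕ → S → Sb → ℝ) (ν : Sb → ℝ) (x : Fin 0 → S) :
    rho 0 P Q ν x = ∑' u, ν u := rfl

lemma rho_succ (m : ℕ) (P : ℕ → Sb → Sb → ℝ) (Q : ℕ → S → Sb → ℝ) (ν : Sb → ℝ)
    (x : Fin (m + 1) → S) :
    rho (m + 1) P Q ν x = ∑' u, ν u * (Q 0 (x 0) u *
      rho m (fun k => P (k + 1)) (fun k => Q (k + 1)) (fun v => P 0 v u) (Fin.tail x)) := rfl

lemma rho_nonneg : ∀ (m : ℕ) (P : ℕ → Sb → Sb → ℝ) (Q : ℕ → S → Sb → ℝ),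
    IsKer P → IsKer Q → ∀ (ν : Sb → ℝ), (∀ u, 0 ≤ ν u) → ∀ x, 0 ≤ rho m P Q ν x
  | 0, P, Q, _, _, ν, hν, x => tsum_nonneg hν
  | m + 1, P, Q, hP, hQ, ν, hν, x => by
      refine tsum_nonneg fun u => mul_nonneg (hν u) (mul_nonneg ((hQ 0 u).1 _) ?_)
      exact rho_nonneg m _ _ hP.shift hQ.shift _ (hP 0 u).1 _

lemma rho_summable_mass : ∀ (m : ℕ) (P : ℕ → Sb → Sb → ℝ) (Q : ℕ → S → Sb → ℝ),
    IsKer P → IsKer Q → ∀ (ν : Sb → ℝ), (∀ u, 0 ≤ ν u) → Summable ν →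
    Summable (rho m P Q ν) ∧ ∑' x, rho m P Q ν x = ∑' u, ν u
  | 0, P, Q, hP, hQ, ν, hν0, hνs => by
      constructor
      · exact Summable.of_finite
      · rw [tsum_eq_single (fun i => i.elim0)]
        · rfl
        · intro b hb; exact absurd (funext fun i => i.elim0) hb
  | m + 1, P, Q, hP, hQ, ν, hν0, hνs => by
      set P' := fun k => P (k + 1) with hP'def
      set Q' := fun k => Q (k + 1) with hQ'def
      have hP' : IsKer P' := hP.shift
      have hQ' : IsKer Q' := hQ.shift
      set R : Sb → (Fin m → S) → ℝ := fun u => rho m P' Q' (fun v => P 0 v u) with hRdef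
      have hIH : ∀ u, Summable (R u) ∧ ∑' y, R u y = 1 := by
        intro u
        have h := rho_summable_mass m P' Q' hP' hQ' (fun v => P 0 v u) (hP 0 u).1
          (hP 0 u).2.summable
        exact ⟨h.1, h.2.trans (hP 0 u).2.tsum_eq⟩
      have hR0 : ∀ u y, 0 ≤ R u y := fun u y =>
        rho_nonneg m P' Q' hP' hQ' _ (hP 0 u).1 y
      set inner : Sb → (Fin (m + 1) → S) → ℝ :=
        fun u x => ν u * (Q 0 (x 0) u * R u (Fin.tail x)) with hinnerdef
      have hinner0 : ∀ u x, 0 ≤ inner u x := fun u x =>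
        mul_nonneg (hν0 u) (mul_nonneg ((hQ 0 u).1 _) (hR0 u _))
      -- summability and total mass of `inner u`
      have key1 : ∀ u, Summable (inner u) ∧ ∑' x, inner u x = ν u := by
        intro u
        have hW : ∀ a : S, Summable (fun y : Fin m → S => ν u * (Q 0 a u * R u y)) :=
          fun a => ((hIH u).1.mul_left _).mul_left _
        have hWs : (fun a : S => ∑' y, ν u * (Q 0 a u * R u y)) =
            fun a => ν u * Q 0 a u := by
          funext a
          rw [tsum_mul_left, tsum_mul_left, (hIH u).2]
          ring
        have hjoint : Summable (fun p : S × (Fin m → S) =>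
            ν u * (Q 0 p.1 u * R u p.2)) := by
          apply summable_pair_of_nonneg
            (fun a y => mul_nonneg (hν0 u) (mul_nonneg ((hQ 0 u).1 _) (hR0 u _))) hW
          rw [hWs]
          exact ((hQ 0 u).2.summable).mul_left _
        have hconskey : ∀ p : S × (Fin m → S),
            inner u (Fin.cons p.1 p.2) = ν u * (Q 0 p.1 u * R u p.2) := by
          intro p; simp [hinnerdef]
        constructor
        · rw [summable_consE_iff]
          exact hjoint.congr fun p => (hconskey p).symm
        · rw [tsum_consE (inner u) (hjoint.congr fun p => (hconskey p).symm)]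
          calc ∑' a, ∑' y, inner u (Fin.cons a y)
              = ∑' a, ∑' y, ν u * (Q 0 a u * R u y) := by
                exact tsum_congr fun a => tsum_congr fun y => hconskey (a, y)
            _ = ∑' a : S, ν u * Q 0 a u := by rw [hWs]
            _ = ν u * 1 := by rw [tsum_mul_left, (hQ 0 u).2.tsum_eq]
            _ = ν u := mul_one _
      have key2 : Summable (fun u => ∑' x, inner u x) := by
        apply Summable.congr hνs
        intro u; exact (key1 u).2.symm
      have hjointUX : Summable (fun p : Sb × (Fin (m + 1) → S) => inner p.1 p.2) :=
        summable_pair_of_nonneg hinner0 (fun u => (key1 u).1) key2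
      have hsum_x : Summable (fun x : Fin (m + 1) → S => ∑' u, inner u x) :=
        ((summable_prod_of_nonneg (fun p => hinner0 p.2 p.1)).1 hjointUX.prod_symm).2
      have hrhoeq : rho (m + 1) P Q ν = fun x => ∑' u, inner u x := rfl
      constructor
      · rw [hrhoeq]; exact hsum_x
      · rw [hrhoeq]
        have hswap : ∑' x, ∑' u, inner u x = ∑' u, ∑' x, inner u x :=
          Summable.tsum_comm' hjointUX (fun u => (key1 u).1)
            (fun x => hjointUX.prod_symm.prod_factor x)
        rw [hswap]
        exact tsum_congr fun u => (key1 u).2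

end HMMAux
namespace HMMAux
set_option linter.unusedSectionVars false
variable {Sb S : Type*} [Inhabited Sb] [Inhabited S]

def doeblinCoeff' {Sb : Type*} (pk : Sb → Sb → ℝ) : ℝ :=
  ⨆ (u : Sb) (u' : Sb), (1 / 2) * ∑' v, |pk v u - pk v u'|

lemma abs_tsum_le' {α : Type*} {f : α → ℝ} (h : Summable fun a => |f a|) :
    |∑' a, f a| ≤ ∑' a, |f a| := by
  simpa only [Real.norm_eq_abs] using
    norm_tsum_le_tsum_norm (f := f) (by simpa only [Real.norm_eq_abs] using h)

/-- delta measure kernel of observations given hidden value. -/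
def kern (m : ℕ) (P : ℕ → Sb → Sb → ℝ) (Q : ℕ → S → Sb → ℝ) (v : Sb) (y : Fin m → S) : ℝ :=
  rho m P Q (fun w => if w = v then 1 else 0) y

lemma dirac_isProb (v : Sb) : IsProb (fun w => if w = v then (1:ℝ) else 0) :=
  ⟨fun w => by by_cases h : w = v <;> simp [h], hasSum_ite_eq v 1⟩

lemma kern_succ (m : ℕ) (P : ℕ → Sb → Sb → ℝ) (Q : ℕ → S → Sb → ℝ) (v : Sb)
    (y : Fin (m + 1) → S) :
    kern (m + 1) P Q v y = Q 0 (y 0) v *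
      rho m (fun k => P (k + 1)) (fun k => Q (k + 1)) (fun w => P 0 w v) (Fin.tail y) := by
  unfold kern
  rw [rho_succ, tsum_eq_single v]
  · simp
  · intro u hu; simp [hu]

lemma rho_eq_tsum_kern (m : ℕ) (P : ℕ → Sb → Sb → ℝ) (Q : ℕ → S → Sb → ℝ) (ν : Sb → ℝ)
    (y : Fin m → S) :
    rho m P Q ν y = ∑' v, ν v * kern m P Q v y := by
  cases m with
  | zero =>
      have : ∀ v : Sb, kern 0 P Q v y = 1 := fun v => by
        unfold kern; rw [rho_zero]; exact tsum_ite_eq v 1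
      simp only [this, mul_one, rho_zero]
  | succ m =>
      rw [rho_succ]
      exact tsum_congr fun u => by rw [kern_succ]

lemma kern_nonneg (m : ℕ) {P : ℕ → Sb → Sb → ℝ} {Q : ℕ → S → Sb → ℝ}
    (hP : IsKer P) (hQ : IsKer Q) (v : Sb) (y : Fin m → S) : 0 ≤ kern m P Q v y :=
  rho_nonneg m P Q hP hQ _ (dirac_isProb v).1 y

lemma rho_summable (m : ℕ) {P : ℕ → Sb → Sb → ℝ} {Q : ℕ → S → Sb → ℝ}
    (hP : IsKer P) (hQ : IsKer Q) {ν : Sb → ℝ} (h0 : ∀ u, 0 ≤ ν u) (hs : Summable ν) :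
    Summable (rho m P Q ν) := (rho_summable_mass m P Q hP hQ ν h0 hs).1

lemma rho_mass (m : ℕ) {P : ℕ → Sb → Sb → ℝ} {Q : ℕ → S → Sb → ℝ}
    (hP : IsKer P) (hQ : IsKer Q) {ν : Sb → ℝ} (hν : IsProb ν) :
    ∑' x, rho m P Q ν x = 1 := by
  rw [(rho_summable_mass m P Q hP hQ ν hν.1 hν.2.summable).2, hν.2.tsum_eq]

lemma rho_le_one (m : ℕ) {P : ℕ → Sb → Sb → ℝ} {Q : ℕ → S → Sb → ℝ}
    (hP : IsKer P) (hQ : IsKer Q) {ν : Sb → ℝ} (hν : IsProb ν) (x : Fin m → S) :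
    rho m P Q ν x ≤ 1 := by
  rw [← rho_mass m hP hQ hν]
  exact Summable.le_tsum (rho_summable m hP hQ hν.1 hν.2.summable) x
    (fun y _ => rho_nonneg m P Q hP hQ ν hν.1 y)

lemma kern_summable (m : ℕ) {P : ℕ → Sb → Sb → ℝ} {Q : ℕ → S → Sb → ℝ}
    (hP : IsKer P) (hQ : IsKer Q) (v : Sb) : Summable (kern m P Q v) :=
  rho_summable m hP hQ (dirac_isProb v).1 (dirac_isProb v).2.summable

lemma kern_le_one (m : ℕ) {P : ℕ → Sb → Sb → ℝ} {Q : ℕ → S → Sb → ℝ}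
    (hP : IsKer P) (hQ : IsKer Q) (v : Sb) (y : Fin m → S) : kern m P Q v y ≤ 1 :=
  rho_le_one m hP hQ (dirac_isProb v) y

lemma rho_smul (m : ℕ) (P : ℕ → Sb → Sb → ℝ) (Q : ℕ → S → Sb → ℝ) (c : ℝ) (ν : Sb → ℝ)
    (x : Fin m → S) : rho m P Q (fun u => c * ν u) x = c * rho m P Q ν x := by
  cases m with
  | zero => rw [rho_zero, rho_zero, tsum_mul_left]
  | succ m =>
      rw [rho_succ, rho_succ, ← tsum_mul_left]
      exact tsum_congr fun u => by ring

lemma rho_mix {α : Type*} (m : ℕ) {P : ℕ → Sb → Sb → ℝ} {Q : ℕ → S → Sb → ℝ}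
    (hP : IsKer P) (hQ : IsKer Q) (c : α → ℝ) (μ : α → Sb → ℝ)
    (hc0 : ∀ a, 0 ≤ c a) (hcs : Summable c) (hμ : ∀ a, IsProb (μ a)) (y : Fin m → S) :
    rho m P Q (fun v => ∑' a, c a * μ a v) y = ∑' a, c a * rho m P Q (μ a) y := by
  set K := fun v => kern m P Q v y with hK
  have hK0 : ∀ v, 0 ≤ K v := fun v => kern_nonneg m hP hQ v y
  have hK1 : ∀ v, K v ≤ 1 := fun v => kern_le_one m hP hQ v y
  set G : α → Sb → ℝ := fun a v => c a * μ a v * K v with hG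
  have hG0 : ∀ a v, 0 ≤ G a v := fun a v =>
    mul_nonneg (mul_nonneg (hc0 a) ((hμ a).1 v)) (hK0 v)
  have h1 : ∀ a, Summable (G a) := by
    intro a
    apply Summable.of_nonneg_of_le (hG0 a) _ (((hμ a).2.summable.mul_left (c a)))
    intro v
    calc G a v ≤ c a * μ a v * 1 :=
          mul_le_mul_of_nonneg_left (hK1 v) (mul_nonneg (hc0 a) ((hμ a).1 v))
      _ = c a * μ a v := mul_one _
  have hGsum_le : ∀ a, ∑' v, G a v ≤ c a := by
    intro a
    calc ∑' v, G a v ≤ ∑' v, c a * μ a v := by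
          apply Summable.tsum_le_tsum _ (h1 a) ((hμ a).2.summable.mul_left (c a))
          intro v
          calc G a v ≤ c a * μ a v * 1 :=
                mul_le_mul_of_nonneg_left (hK1 v) (mul_nonneg (hc0 a) ((hμ a).1 v))
            _ = c a * μ a v := mul_one _
      _ = c a * 1 := by rw [tsum_mul_left, (hμ a).2.tsum_eq]
      _ = c a := mul_one _
  have h2 : Summable fun a => ∑' v, G a v :=
    Summable.of_nonneg_of_le (fun a => tsum_nonneg (hG0 a)) hGsum_le hcs
  have hjoint : Summable fun p : α × Sb => |G p.1 p.2| := by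
    apply Summable.congr (summable_pair_of_nonneg hG0 h1 h2)
    intro p; rw [abs_of_nonneg (hG0 p.1 p.2)]
  calc rho m P Q (fun v => ∑' a, c a * μ a v) y
      = ∑' v, (∑' a, c a * μ a v) * K v := rho_eq_tsum_kern m P Q _ y
    _ = ∑' v, ∑' a, G a v := by
        exact tsum_congr fun v => by rw [← tsum_mul_right]
    _ = ∑' a, ∑' v, G a v := tsum_swap_abs G hjoint
    _ = ∑' a, c a * rho m P Q (μ a) y := by
        refine tsum_congr fun a => ?_
        rw [rho_eq_tsum_kern m P Q (μ a) y, ← tsum_mul_left]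
        exact tsum_congr fun v => by ring

/-- Expectation of `f` under `rho`. -/
def Ex (m : ℕ) (P : ℕ → Sb → Sb → ℝ) (Q : ℕ → S → Sb → ℝ) (ν : Sb → ℝ)
    (f : (Fin m → S) → ℝ) : ℝ := ∑' x, rho m P Q ν x * f x

lemma ex_summable (m : ℕ) {P : ℕ → Sb → Sb → ℝ} {Q : ℕ → S → Sb → ℝ}
    (hP : IsKer P) (hQ : IsKer Q) {ν : Sb → ℝ} (h0 : ∀ u, 0 ≤ ν u) (hs : Summable ν)
    {f : (Fin m → S) → ℝ} {C : ℝ} (hC : ∀ x, |f x| ≤ C) :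
    Summable fun x => rho m P Q ν x * f x := by
  apply Summable.of_abs
  apply Summable.of_nonneg_of_le (fun x => abs_nonneg _) _
    ((rho_summable m hP hQ h0 hs).mul_right C)
  intro x
  rw [abs_mul, abs_of_nonneg (rho_nonneg m P Q hP hQ ν h0 x)]
  exact mul_le_mul_of_nonneg_left (hC x) (rho_nonneg m P Q hP hQ ν h0 x)

lemma ex_abs_le (m : ℕ) {P : ℕ → Sb → Sb → ℝ} {Q : ℕ → S → Sb → ℝ}
    (hP : IsKer P) (hQ : IsKer Q) {ν : Sb → ℝ} (hν : IsProb ν)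
    {f : (Fin m → S) → ℝ} {C : ℝ} (hC : ∀ x, |f x| ≤ C) :
    |Ex m P Q ν f| ≤ C := by
  have h0 := hν.1
  have hs := hν.2.summable
  have hsum := ex_summable m hP hQ h0 hs hC
  calc |Ex m P Q ν f| ≤ ∑' x, |rho m P Q ν x * f x| := abs_tsum_le' hsum.abs
    _ ≤ ∑' x, rho m P Q ν x * C := by
        apply Summable.tsum_le_tsum _ hsum.abs ((rho_summable m hP hQ h0 hs).mul_right C)
        intro x
        rw [abs_mul, abs_of_nonneg (rho_nonneg m P Q hP hQ ν h0 x)]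
        exact mul_le_mul_of_nonneg_left (hC x) (rho_nonneg m P Q hP hQ ν h0 x)
    _ = 1 * C := by rw [tsum_mul_right, rho_mass m hP hQ hν]
    _ = C := one_mul _

lemma ex_sub_pointwise (m : ℕ) {P : ℕ → Sb → Sb → ℝ} {Q : ℕ → S → Sb → ℝ}
    (hP : IsKer P) (hQ : IsKer Q) {ν : Sb → ℝ} (hν : IsProb ν)
    {f g : (Fin m → S) → ℝ} {Cf Cg c : ℝ} (hCf : ∀ x, |f x| ≤ Cf) (hCg : ∀ x, |g x| ≤ Cg)
    (h : ∀ x, |f x - g x| ≤ c) :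
    |Ex m P Q ν f - Ex m P Q ν g| ≤ c := by
  have h0 := hν.1
  have hs := hν.2.summable
  have hsf := ex_summable m hP hQ h0 hs hCf
  have hsg := ex_summable m hP hQ h0 hs hCg
  have heq : Ex m P Q ν f - Ex m P Q ν g = ∑' x, rho m P Q ν x * (f x - g x) := by
    rw [Ex, Ex, ← Summable.tsum_sub hsf hsg]
    exact tsum_congr fun x => by ring
  rw [heq]
  have hΔsum : Summable fun x => rho m P Q ν x * (f x - g x) := by
    have : ∀ x, |f x - g x| ≤ Cf + Cg := fun x =>
      (abs_sub (f x) (g x)).trans (add_le_add (hCf x) (hCg x))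
    exact ex_summable m hP hQ h0 hs this
  calc |∑' x, rho m P Q ν x * (f x - g x)| ≤ ∑' x, |rho m P Q ν x * (f x - g x)| :=
        abs_tsum_le' hΔsum.abs
    _ ≤ ∑' x, rho m P Q ν x * c := by
        apply Summable.tsum_le_tsum _ hΔsum.abs ((rho_summable m hP hQ h0 hs).mul_right c)
        intro x
        rw [abs_mul, abs_of_nonneg (rho_nonneg m P Q hP hQ ν h0 x)]
        exact mul_le_mul_of_nonneg_left (h x) (rho_nonneg m P Q hP hQ ν h0 x)
    _ = 1 * c := by rw [tsum_mul_right, rho_mass m hP hQ hν]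
    _ = c := one_mul _

set_option maxHeartbeats 1000000 in
lemma ex_mix {α : Type*} (m : ℕ) {P : ℕ → Sb → Sb → ℝ} {Q : ℕ → S → Sb → ℝ}
    (hP : IsKer P) (hQ : IsKer Q) (c : α → ℝ) (μ : α → Sb → ℝ)
    (hc0 : ∀ a, 0 ≤ c a) (hcs : Summable c) (hμ : ∀ a, IsProb (μ a))
    {f : (Fin m → S) → ℝ} {C : ℝ} (hC0 : 0 ≤ C) (hC : ∀ x, |f x| ≤ C) :
    Ex m P Q (fun v => ∑' a, c a * μ a v) f = ∑' a, c a * Ex m P Q (μ a) f := by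
  have hr0 : ∀ (a : α) (y : Fin m → S), 0 ≤ rho m P Q (μ a) y := fun a y =>
    rho_nonneg m P Q hP hQ _ (hμ a).1 y
  have habs : ∀ (a : α) (y : Fin m → S), |c a * rho m P Q (μ a) y * f y|
      ≤ c a * rho m P Q (μ a) y * C := by
    intro a y
    rw [abs_mul, abs_of_nonneg (mul_nonneg (hc0 a) (hr0 a y))]
    exact mul_le_mul_of_nonneg_left (hC y) (mul_nonneg (hc0 a) (hr0 a y))
  have hdomsum : Summable fun p : α × (Fin m → S) =>
      c p.1 * rho m P Q (μ p.1) p.2 * C := by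
    apply summable_pair_of_nonneg
      (fun a y => mul_nonneg (mul_nonneg (hc0 a) (hr0 a y)) hC0)
    · intro a
      exact ((rho_summable m hP hQ (hμ a).1 (hμ a).2.summable).mul_left (c a)).mul_right C
    · apply Summable.congr (hcs.mul_right C)
      intro a
      have hfn : (fun y : Fin m → S => c a * rho m P Q (μ a) y * C)
          = fun y => (c a * C) * rho m P Q (μ a) y := by funext y; ring
      rw [hfn, tsum_mul_left, rho_mass m hP hQ (hμ a), mul_one]
  have hjoint : Summable fun p : α × (Fin m → S) =>
      |c p.1 * rho m P Q (μ p.1) p.2 * f p.2| :=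
    Summable.of_nonneg_of_le (fun p => abs_nonneg _) (fun p => habs p.1 p.2) hdomsum
  calc Ex m P Q (fun v => ∑' a, c a * μ a v) f
      = ∑' y, (∑' a, c a * rho m P Q (μ a) y) * f y := by
        unfold Ex
        exact tsum_congr fun y => by rw [rho_mix m hP hQ c μ hc0 hcs hμ y]
    _ = ∑' y, ∑' a, c a * rho m P Q (μ a) y * f y := by
        refine tsum_congr fun y => ?_
        rw [← tsum_mul_right]
    _ = ∑' a, ∑' y, c a * rho m P Q (μ a) y * f y :=
        tsum_swap_abs (fun a y => c a * rho m P Q (μ a) y * f y) hjoint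
    _ = ∑' a, c a * Ex m P Q (μ a) f := by
        refine tsum_congr fun a => ?_
        unfold Ex
        rw [← tsum_mul_left]
        exact tsum_congr fun y => by ring


/-! ### Total variation -/

def tv (ν ν' : Sb → ℝ) : ℝ := (1 / 2) * ∑' u, |ν u - ν' u|

lemma tv_nonneg (ν ν' : Sb → ℝ) : 0 ≤ tv ν ν' :=
  mul_nonneg (by norm_num) (tsum_nonneg fun u => abs_nonneg _)

lemma tv_le_one {ν ν' : Sb → ℝ} (hν : IsProb ν) (hν' : IsProb ν') : tv ν ν' ≤ 1 := by
  have hs : Summable fun u => |ν u - ν' u| := (hν.2.summable.sub hν'.2.summable).abs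
  have h2 : ∑' u, |ν u - ν' u| ≤ 2 := by
    calc ∑' u, |ν u - ν' u| ≤ ∑' u, (ν u + ν' u) := by
          apply Summable.tsum_le_tsum _ hs (hν.2.summable.add hν'.2.summable)
          intro u
          calc |ν u - ν' u| ≤ |ν u| + |ν' u| := abs_sub _ _
            _ = ν u + ν' u := by rw [abs_of_nonneg (hν.1 u), abs_of_nonneg (hν'.1 u)]
      _ = 1 + 1 := by rw [Summable.tsum_add hν.2.summable hν'.2.summable, hν.2.tsum_eq, hν'.2.tsum_eq]
      _ = 2 := by norm_num
  unfold tv; linarith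

/-- The key total-variation pairing estimate. -/
lemma tv_pair {ν ν' : Sb → ℝ} (hν : IsProb ν) (hν' : IsProb ν') {g : Sb → ℝ} {L : ℝ}
    (hL : 0 ≤ L) (hg : ∀ u u', |g u - g u'| ≤ L) :
    |(∑' u, ν u * g u) - ∑' u, ν' u * g u| ≤ tv ν ν' * L := by
  have hgb : ∀ u, |g u| ≤ |g default| + L := by
    intro u
    calc |g u| = |g u - g default + g default| := by ring_nf
      _ ≤ |g u - g default| + |g default| := abs_add_le _ _
      _ ≤ L + |g default| := add_le_add_left (hg u default) _
      _ = |g default| + L := add_comm _ _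
  set Cg := |g default| + L with hCg
  have hCg0 : 0 ≤ Cg := le_trans (abs_nonneg _) (hgb default)
  have hsummul : ∀ {μ : Sb → ℝ}, IsProb μ → Summable fun u => μ u * g u := by
    intro μ hμ
    apply Summable.of_abs
    apply Summable.of_nonneg_of_le (fun u => abs_nonneg _) _ (hμ.2.summable.mul_right Cg)
    intro u
    rw [abs_mul, abs_of_nonneg (hμ.1 u)]
    exact mul_le_mul_of_nonneg_left (hgb u) (hμ.1 u)
  set τ : Sb → ℝ := fun u => ν u - ν' u with hτ
  have hτs : Summable τ := hν.2.summable.sub hν'.2.summable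
  have hτ0 : ∑' u, τ u = 0 := by
    rw [hτ, Summable.tsum_sub hν.2.summable hν'.2.summable, hν.2.tsum_eq, hν'.2.tsum_eq, sub_self]
  set pos : Sb → ℝ := fun u => max (τ u) 0 with hpos
  set neg : Sb → ℝ := fun u => max (-τ u) 0 with hneg
  have hpos0 : ∀ u, 0 ≤ pos u := fun u => le_max_right _ _
  have hneg0 : ∀ u, 0 ≤ neg u := fun u => le_max_right _ _
  have hposle : ∀ u, pos u ≤ |τ u| := fun u => max_le (le_abs_self _) (abs_nonneg _)
  have hnegle : ∀ u, neg u ≤ |τ u| := fun u => max_le (neg_le_abs _) (abs_nonneg _)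
  have hposs : Summable pos := Summable.of_nonneg_of_le hpos0 hposle hτs.abs
  have hnegs : Summable neg := Summable.of_nonneg_of_le hneg0 hnegle hτs.abs
  have hsub : ∀ u, pos u - neg u = τ u := fun u => max_zero_sub_max_neg_zero_eq_self _
  have hadd : ∀ u, pos u + neg u = |τ u| := fun u => max_zero_add_max_neg_zero_eq_abs_self _
  have hA : ∑' u, pos u = tv ν ν' := by
    have e1 : ∑' u, pos u - ∑' u, neg u = 0 := by
      rw [← Summable.tsum_sub hposs hnegs]
      rw [show ∑' u, (pos u - neg u) = ∑' u, τ u from tsum_congr fun u => hsub u]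
      exact hτ0
    have e2 : ∑' u, pos u + ∑' u, neg u = ∑' u, |τ u| := by
      rw [← Summable.tsum_add hposs hnegs]
      exact tsum_congr fun u => hadd u
    have htveq : tv ν ν' = (1 / 2) * ∑' u, |τ u| := rfl
    rw [htveq]
    linarith
  have hB : ∑' u, neg u = tv ν ν' := by
    have e1 : ∑' u, pos u - ∑' u, neg u = 0 := by
      rw [← Summable.tsum_sub hposs hnegs]
      rw [show ∑' u, (pos u - neg u) = ∑' u, τ u from tsum_congr fun u => hsub u]
      exact hτ0
    linarith [hA]
  -- sup and inf of g
  have hne : (Set.range g).Nonempty := ⟨g default, ⟨default, rfl⟩⟩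
  have hbdd : BddAbove (Set.range g) := ⟨|g default| + L, by
    rintro _ ⟨u, rfl⟩; exact le_trans (le_abs_self _) (hgb u)⟩
  have hbddb : BddBelow (Set.range g) := ⟨-(|g default| + L), by
    rintro _ ⟨u, rfl⟩; exact neg_le_of_abs_le (hgb u)⟩
  set Sg := sSup (Set.range g) with hSg
  set Ig := sInf (Set.range g) with hIg
  have hgle : ∀ u, g u ≤ Sg := fun u => le_csSup hbdd ⟨u, rfl⟩
  have hgge : ∀ u, Ig ≤ g u := fun u => csInf_le hbddb ⟨u, rfl⟩
  have hSI : Sg ≤ Ig + L := by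
    apply csSup_le hne
    rintro _ ⟨u, rfl⟩
    have : ∀ u', g u - L ≤ g u' := by
      intro u'
      have := abs_le.1 (hg u u')
      linarith [this.2]
    have h1 : g u - L ≤ Ig := le_csInf hne (by rintro _ ⟨u', rfl⟩; exact this u')
    linarith
  -- sums with g
  have hposgs : Summable fun u => pos u * g u := by
    apply Summable.of_abs
    apply Summable.of_nonneg_of_le (fun u => abs_nonneg _) _ (hposs.mul_right Cg)
    intro u
    rw [abs_mul, abs_of_nonneg (hpos0 u)]
    exact mul_le_mul_of_nonneg_left (hgb u) (hpos0 u)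
  have hneggs : Summable fun u => neg u * g u := by
    apply Summable.of_abs
    apply Summable.of_nonneg_of_le (fun u => abs_nonneg _) _ (hnegs.mul_right Cg)
    intro u
    rw [abs_mul, abs_of_nonneg (hneg0 u)]
    exact mul_le_mul_of_nonneg_left (hgb u) (hneg0 u)
  have hτg : (∑' u, ν u * g u) - ∑' u, ν' u * g u = ∑' u, pos u * g u - ∑' u, neg u * g u := by
    rw [← Summable.tsum_sub (hsummul hν) (hsummul hν'), ← Summable.tsum_sub hposgs hneggs]
    refine tsum_congr fun u => ?_
    have h2 : pos u - neg u = ν u - ν' u := hsub u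
    linear_combination (-(g u)) * h2
  have hub1 : ∑' u, pos u * g u ≤ tv ν ν' * Sg := by
    calc ∑' u, pos u * g u ≤ ∑' u, pos u * Sg := by
          apply Summable.tsum_le_tsum _ hposgs (hposs.mul_right Sg)
          intro u; exact mul_le_mul_of_nonneg_left (hgle u) (hpos0 u)
      _ = tv ν ν' * Sg := by rw [tsum_mul_right, hA]
  have hlb1 : tv ν ν' * Ig ≤ ∑' u, pos u * g u := by
    calc tv ν ν' * Ig = ∑' u, pos u * Ig := by rw [tsum_mul_right, hA]
      _ ≤ ∑' u, pos u * g u := by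
          apply Summable.tsum_le_tsum _ (hposs.mul_right Ig) hposgs
          intro u; exact mul_le_mul_of_nonneg_left (hgge u) (hpos0 u)
  have hub2 : ∑' u, neg u * g u ≤ tv ν ν' * Sg := by
    calc ∑' u, neg u * g u ≤ ∑' u, neg u * Sg := by
          apply Summable.tsum_le_tsum _ hneggs (hnegs.mul_right Sg)
          intro u; exact mul_le_mul_of_nonneg_left (hgle u) (hneg0 u)
      _ = tv ν ν' * Sg := by rw [tsum_mul_right, hB]
  have hlb2 : tv ν ν' * Ig ≤ ∑' u, neg u * g u := by
    calc tv ν ν' * Ig = ∑' u, neg u * Ig := by rw [tsum_mul_right, hB]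
      _ ≤ ∑' u, neg u * g u := by
          apply Summable.tsum_le_tsum _ (hnegs.mul_right Ig) hneggs
          intro u; exact mul_le_mul_of_nonneg_left (hgge u) (hneg0 u)
  have htv0 : 0 ≤ tv ν ν' := tv_nonneg ν ν'
  rw [hτg]
  rw [abs_le]
  constructor
  · nlinarith
  · nlinarith

lemma tv_le_doeblin {P : Sb → Sb → ℝ}
    (hP : ∀ u, (∀ v, 0 ≤ P v u) ∧ HasSum (fun v => P v u) 1) (u u' : Sb) :
    tv (fun v => P v u) (fun v => P v u') ≤ doeblinCoeff' P := by
  set h : Sb → Sb → ℝ := fun a b => (1 / 2) * ∑' v, |P v a - P v b| with hh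
  have hb1 : ∀ a b, h a b ≤ 1 := by
    intro a b
    have : tv (fun v => P v a) (fun v => P v b) ≤ 1 :=
      tv_le_one ⟨(hP a).1, (hP a).2⟩ ⟨(hP b).1, (hP b).2⟩
    exact this
  have step1 : h u u' ≤ ⨆ b, h u b :=
    le_ciSup ⟨1, by rintro _ ⟨b, rfl⟩; exact hb1 u b⟩ u'
  have step2 : (⨆ b, h u b) ≤ ⨆ a, ⨆ b, h a b := by
    apply le_ciSup (f := fun a => ⨆ b, h a b)
    exact ⟨1, by rintro _ ⟨a, rfl⟩; exact ciSup_le fun b => hb1 a b⟩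
  exact le_trans step1 step2

lemma doeblin_nonneg' {P : Sb → Sb → ℝ}
    (hP : ∀ u, (∀ v, 0 ≤ P v u) ∧ HasSum (fun v => P v u) 1) :
    0 ≤ doeblinCoeff' P := by
  have h0 : tv (fun v => P v default) (fun v => P v default) = 0 := by
    unfold tv; simp
  have := tv_le_doeblin hP default default
  rw [h0] at this
  exact this

lemma doeblin_const {c : Sb → ℝ} :
    doeblinCoeff' (fun v (_ : Sb) => c v) = 0 := by
  unfold doeblinCoeff'
  have : ∀ a b : Sb, (1 / 2 : ℝ) * ∑' v, |c v - c v| = 0 := by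
    intro a b; simp
  simp only [sub_self, abs_zero, tsum_zero, mul_zero]
  rw [ciSup_const, ciSup_const]

/-! ### The chord bound and auxiliary sequence -/

lemma exp_le_chord {x B : ℝ} (hB : 0 < B) (hx : |x| ≤ B) :
    Real.exp x ≤ Real.cosh B + x * Real.sinh B / B := by
  obtain ⟨hx1, hx2⟩ := abs_le.1 hx
  have ha : (0:ℝ) ≤ (B - x) / (2 * B) := div_nonneg (by linarith) (by linarith)
  have hb : (0:ℝ) ≤ (B + x) / (2 * B) := div_nonneg (by linarith) (by linarith)
  have hab : (B - x) / (2 * B) + (B + x) / (2 * B) = 1 := by field_simp; ring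
  have key := convexOn_exp.2 (Set.mem_univ (-B)) (Set.mem_univ B) ha hb hab
  have harg : ((B - x) / (2 * B)) • (-B) + ((B + x) / (2 * B)) • B = x := by
    rw [smul_eq_mul, smul_eq_mul]; field_simp; ring
  rw [harg] at key
  calc Real.exp x ≤ (B - x) / (2 * B) * Real.exp (-B) + (B + x) / (2 * B) * Real.exp B := by
        simpa using key
    _ = Real.cosh B + x * Real.sinh B / B := by
        rw [Real.cosh_eq, Real.sinh_eq]
        field_simp
        ring

def Lb (c θ : ℝ) : ℕ → ℝ
  | 0 => 0
  | m + 1 => c + θ * Lb c θ m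

lemma Lb_nonneg {c θ : ℝ} (hc : 0 ≤ c) (hθ : 0 ≤ θ) : ∀ m, 0 ≤ Lb c θ m
  | 0 => le_refl 0
  | m + 1 => add_nonneg hc (mul_nonneg hθ (Lb_nonneg hc hθ m))

lemma Lb_le {c θ : ℝ} (hc : 0 ≤ c) (hθ0 : 0 ≤ θ) (hθ1 : θ < 1) :
    ∀ m, Lb c θ m ≤ c / (1 - θ)
  | 0 => div_nonneg hc (by linarith)
  | m + 1 => by
      have ih := Lb_le hc hθ0 hθ1 m
      have h1θ : (0:ℝ) < 1 - θ := by linarith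
      have : c + θ * Lb c θ m ≤ c + θ * (c / (1 - θ)) :=
        add_le_add_right (mul_le_mul_of_nonneg_left ih hθ0) c
      have heq : c + θ * (c / (1 - θ)) = c / (1 - θ) := by
        field_simp
        ring
      calc Lb c θ (m + 1) = c + θ * Lb c θ m := rfl
        _ ≤ c + θ * (c / (1 - θ)) := this
        _ = c / (1 - θ) := heq


/-! ### Hamming-Lipschitz functions -/

def Lip (n : ℕ) {m : ℕ} (f : (Fin m → S) → ℝ) : Prop :=
  ∀ x x', |f x - f x'| ≤ ((Finset.univ.filter fun i => x i ≠ x' i).card : ℝ) / n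

lemma lip_cons {n m : ℕ} {f : (Fin (m + 1) → S) → ℝ} (hf : Lip n f) (a : S) :
    Lip n (fun y => f (Fin.cons a y)) := by
  intro y y'
  have hcard : (Finset.univ.filter fun i : Fin (m + 1) => (Fin.cons a y : Fin (m+1) → S) i ≠ (Fin.cons a y' : Fin (m+1) → S) i)
      = (Finset.univ.filter fun j : Fin m => y j ≠ y' j).image Fin.succ := by
    ext i
    simp only [Finset.mem_filter, Finset.mem_univ, true_and, Finset.mem_image]
    constructor
    · intro hi
      rcases Fin.eq_zero_or_eq_succ i with h0 | ⟨j, rfl⟩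
      · subst h0; simp [Fin.cons_zero] at hi
      · exact ⟨j, by simpa [Fin.cons_succ] using hi, rfl⟩
    · rintro ⟨j, hj, rfl⟩
      simpa [Fin.cons_succ] using hj
  have key := hf (Fin.cons a y) (Fin.cons a y')
  rw [hcard, Finset.card_image_of_injective _ (Fin.succ_injective m)] at key
  exact key

lemma lip_head {n m : ℕ} (hn : 0 < n) {f : (Fin (m + 1) → S) → ℝ} (hf : Lip n f)
    (a a' : S) (y : Fin m → S) :
    |f (Fin.cons a y) - f (Fin.cons a' y)| ≤ 1 / n := by
  have hsub : (Finset.univ.filter fun i : Fin (m + 1) =>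
      (Fin.cons a y : Fin (m+1) → S) i ≠ (Fin.cons a' y : Fin (m+1) → S) i) ⊆ {0} := by
    intro i hi
    simp only [Finset.mem_filter, Finset.mem_univ, true_and] at hi
    rcases Fin.eq_zero_or_eq_succ i with h0 | ⟨j, rfl⟩
    · simp [h0]
    · exfalso; exact hi (by simp [Fin.cons_succ])
  have hcard : ((Finset.univ.filter fun i : Fin (m + 1) =>
      (Fin.cons a y : Fin (m+1) → S) i ≠ (Fin.cons a' y : Fin (m+1) → S) i).card : ℝ) ≤ 1 := by
    have := Finset.card_le_card hsub
    simp only [Finset.card_singleton] at this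
    exact_mod_cast this
  refine (hf (Fin.cons a y) (Fin.cons a' y)).trans ?_
  have hn' : (0:ℝ) < n := by exact_mod_cast hn
  gcongr

lemma lip_bounded {n m : ℕ} (hn : 0 < n) {f : (Fin m → S) → ℝ} (hf : Lip n f) (x : Fin m → S) :
    |f x| ≤ |f default| + m / n := by
  have h1 := hf x default
  have hcard : ((Finset.univ.filter fun i : Fin m => x i ≠ (default : Fin m → S) i).card : ℝ) ≤ m := by
    have := Finset.card_filter_le Finset.univ (fun i : Fin m => x i ≠ (default : Fin m → S) i)
    simp only [Finset.card_univ, Fintype.card_fin] at this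
    exact_mod_cast this
  have hn' : (0:ℝ) < n := by exact_mod_cast hn
  have h2 : |f x - f default| ≤ m / n := h1.trans (by gcongr)
  calc |f x| = |f x - f default + f default| := by ring_nf
    _ ≤ |f x - f default| + |f default| := abs_add_le _ _
    _ ≤ m / n + |f default| := add_le_add_left h2 _
    _ = |f default| + m / n := add_comm _ _

/-! ### Splitting the first observation -/

/-- Law of the observation tail given the first hidden state `u`. -/
def rhoTail (m : ℕ) (P : ℕ → Sb → Sb → ℝ) (Q : ℕ → S → Sb → ℝ) (u : Sb) :
    (Fin m → S) → ℝ :=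
  rho m (fun k => P (k + 1)) (fun k => Q (k + 1)) (fun v => P 0 v u)

lemma rho_succ' (m : ℕ) (P : ℕ → Sb → Sb → ℝ) (Q : ℕ → S → Sb → ℝ) (ν : Sb → ℝ)
    (x : Fin (m + 1) → S) :
    rho (m + 1) P Q ν x = ∑' u, ν u * (Q 0 (x 0) u * rhoTail m P Q u (Fin.tail x)) := rfl

lemma rhoTail_nonneg (m : ℕ) {P : ℕ → Sb → Sb → ℝ} {Q : ℕ → S → Sb → ℝ}
    (hP : IsKer P) (hQ : IsKer Q) (u : Sb) (y : Fin m → S) : 0 ≤ rhoTail m P Q u y :=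
  rho_nonneg m _ _ hP.shift hQ.shift _ (hP 0 u).1 y

lemma rhoTail_summable (m : ℕ) {P : ℕ → Sb → Sb → ℝ} {Q : ℕ → S → Sb → ℝ}
    (hP : IsKer P) (hQ : IsKer Q) (u : Sb) : Summable (rhoTail m P Q u) :=
  rho_summable m hP.shift hQ.shift (hP 0 u).1 (hP 0 u).2.summable

lemma rhoTail_mass (m : ℕ) {P : ℕ → Sb → Sb → ℝ} {Q : ℕ → S → Sb → ℝ}
    (hP : IsKer P) (hQ : IsKer Q) (u : Sb) : ∑' y, rhoTail m P Q u y = 1 :=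
  rho_mass m hP.shift hQ.shift ⟨(hP 0 u).1, (hP 0 u).2⟩

lemma rho_inner (m : ℕ) {P : ℕ → Sb → Sb → ℝ} {Q : ℕ → S → Sb → ℝ}
    (hP : IsKer P) (hQ : IsKer Q) {ν : Sb → ℝ} (hν0 : ∀ u, 0 ≤ ν u) (hνs : Summable ν) :
    (∀ u, Summable (fun x : Fin (m + 1) → S =>
        ν u * (Q 0 (x 0) u * rhoTail m P Q u (Fin.tail x)))) ∧
    (∀ u, ∑' x : Fin (m + 1) → S,
        ν u * (Q 0 (x 0) u * rhoTail m P Q u (Fin.tail x)) = ν u) ∧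
    Summable (fun p : Sb × (Fin (m + 1) → S) =>
        ν p.1 * (Q 0 (p.2 0) p.1 * rhoTail m P Q p.1 (Fin.tail p.2))) := by
  have hR0 : ∀ u y, 0 ≤ rhoTail m P Q u y := fun u y => rhoTail_nonneg m hP hQ u y
  have key1 : ∀ u, Summable (fun x : Fin (m + 1) → S =>
      ν u * (Q 0 (x 0) u * rhoTail m P Q u (Fin.tail x))) ∧
      ∑' x : Fin (m + 1) → S, ν u * (Q 0 (x 0) u * rhoTail m P Q u (Fin.tail x)) = ν u := by
    intro u
    have hW : ∀ a : S, Summable (fun y : Fin m → S =>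
        ν u * (Q 0 a u * rhoTail m P Q u y)) :=
      fun a => ((rhoTail_summable m hP hQ u).mul_left _).mul_left _
    have hWs : (fun a : S => ∑' y, ν u * (Q 0 a u * rhoTail m P Q u y)) =
        fun a => ν u * Q 0 a u := by
      funext a
      rw [tsum_mul_left, tsum_mul_left, rhoTail_mass m hP hQ u]
      ring
    have hjoint : Summable (fun p : S × (Fin m → S) =>
        ν u * (Q 0 p.1 u * rhoTail m P Q u p.2)) := by
      apply summable_pair_of_nonneg
        (fun a y => mul_nonneg (hν0 u) (mul_nonneg ((hQ 0 u).1 _) (hR0 u _))) hW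
      rw [hWs]
      exact ((hQ 0 u).2.summable).mul_left _
    have hconskey : ∀ p : S × (Fin m → S),
        ν u * (Q 0 ((Fin.cons p.1 p.2 : Fin (m+1) → S) 0) u *
          rhoTail m P Q u (Fin.tail (Fin.cons p.1 p.2 : Fin (m+1) → S))) =
        ν u * (Q 0 p.1 u * rhoTail m P Q u p.2) := by
      intro p; rw [Fin.cons_zero, Fin.tail_cons]
    constructor
    · rw [summable_consE_iff]
      exact hjoint.congr fun p => (hconskey p).symm
    · rw [tsum_consE _ (hjoint.congr fun p => (hconskey p).symm)]
      calc ∑' a, ∑' y, ν u * (Q 0 ((Fin.cons a y : Fin (m+1) → S) 0) u *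
              rhoTail m P Q u (Fin.tail (Fin.cons a y : Fin (m+1) → S)))
          = ∑' a, ∑' y, ν u * (Q 0 a u * rhoTail m P Q u y) :=
            tsum_congr fun a => tsum_congr fun y => hconskey (a, y)
        _ = ∑' a : S, ν u * Q 0 a u := by rw [hWs]
        _ = ν u * 1 := by rw [tsum_mul_left, (hQ 0 u).2.tsum_eq]
        _ = ν u := mul_one _
  refine ⟨fun u => (key1 u).1, fun u => (key1 u).2, ?_⟩
  apply summable_pair_of_nonneg
    (fun u x => mul_nonneg (hν0 u) (mul_nonneg ((hQ 0 u).1 _) (hR0 u _)))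
    (fun u => (key1 u).1)
  exact hνs.congr fun u => ((key1 u).2).symm

/-- Key factorization: integrating a bounded weight against `rho (m+1)`. -/
lemma tsum_rho_succ_mul (m : ℕ) {P : ℕ → Sb → Sb → ℝ} {Q : ℕ → S → Sb → ℝ}
    (hP : IsKer P) (hQ : IsKer Q) {ν : Sb → ℝ} (hν0 : ∀ u, 0 ≤ ν u) (hνs : Summable ν)
    {w : (Fin (m + 1) → S) → ℝ} {C : ℝ} (hC0 : 0 ≤ C) (hw : ∀ x, |w x| ≤ C) :
    ∑' x, rho (m + 1) P Q ν x * w x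
      = ∑' u, ν u * ∑' a, Q 0 a u * ∑' y, rhoTail m P Q u y * w (Fin.cons a y) := by
  obtain ⟨hxs, hxt, hjoint⟩ := rho_inner m hP hQ hν0 hνs
  have hR0 : ∀ u y, 0 ≤ rhoTail m P Q u y := fun u y => rhoTail_nonneg m hP hQ u y
  have hinner0 : ∀ u (x : Fin (m + 1) → S),
      0 ≤ ν u * (Q 0 (x 0) u * rhoTail m P Q u (Fin.tail x)) :=
    fun u x => mul_nonneg (hν0 u) (mul_nonneg ((hQ 0 u).1 _) (hR0 u _))
  have habsj : Summable fun p : Sb × (Fin (m + 1) → S) =>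
      |ν p.1 * (Q 0 (p.2 0) p.1 * rhoTail m P Q p.1 (Fin.tail p.2)) * w p.2| := by
    apply Summable.of_nonneg_of_le (fun p => abs_nonneg _) _ (hjoint.mul_right C)
    intro p
    rw [abs_mul, abs_of_nonneg (hinner0 p.1 p.2)]
    exact mul_le_mul_of_nonneg_left (hw p.2) (hinner0 p.1 p.2)
  calc ∑' x, rho (m + 1) P Q ν x * w x
      = ∑' x, ∑' u, ν u * (Q 0 (x 0) u * rhoTail m P Q u (Fin.tail x)) * w x := by
        refine tsum_congr fun x => ?_
        rw [rho_succ', ← tsum_mul_right]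
    _ = ∑' u, ∑' x, ν u * (Q 0 (x 0) u * rhoTail m P Q u (Fin.tail x)) * w x :=
        tsum_swap_abs _ habsj
    _ = ∑' u, ν u * ∑' a, Q 0 a u * ∑' y, rhoTail m P Q u y * w (Fin.cons a y) := by
        refine tsum_congr fun u => ?_
        have hsumx : Summable fun x : Fin (m + 1) → S =>
            ν u * (Q 0 (x 0) u * rhoTail m P Q u (Fin.tail x)) * w x :=
          (habsj.prod_factor u).of_abs
        rw [tsum_consE _ ((summable_consE_iff _).1 hsumx)]
        calc ∑' a, ∑' y, ν u * (Q 0 ((Fin.cons a y : Fin (m+1) → S) 0) u *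
                rhoTail m P Q u (Fin.tail (Fin.cons a y : Fin (m+1) → S))) * w (Fin.cons a y)
            = ∑' a, (ν u * Q 0 a u) * ∑' y, rhoTail m P Q u y * w (Fin.cons a y) := by
              refine tsum_congr fun a => ?_
              rw [← tsum_mul_left]
              refine tsum_congr fun y => ?_
              rw [Fin.cons_zero, Fin.tail_cons]
              ring
          _ = ν u * ∑' a, Q 0 a u * ∑' y, rhoTail m P Q u y * w (Fin.cons a y) := by
              rw [← tsum_mul_left]
              exact tsum_congr fun a => by ring


/-! ### Lipschitz dependence on the initial hidden law -/

lemma lipA (n : ℕ) (hn : 0 < n) (θ : ℝ) (hθ0 : 0 ≤ θ) :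
    ∀ (m : ℕ) (P : ℕ → Sb → Sb → ℝ) (Q : ℕ → S → Sb → ℝ),
    IsKer P → IsKer Q → (∀ k, doeblinCoeff' (P k) ≤ θ) →
    ∀ (ν ν' : Sb → ℝ), IsProb ν → IsProb ν' →
    ∀ (f : (Fin m → S) → ℝ), Lip n f →
    |Ex m P Q ν f - Ex m P Q ν' f| ≤ tv ν ν' * Lb (1 / n) θ m
  | 0, P, Q, hP, hQ, hdob, ν, ν', hν, hν', f, hf => by
      have huniq : ∀ x : Fin 0 → S, x = (fun i => i.elim0) :=
        fun x => funext fun i => i.elim0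
      have hEx : ∀ (μ : Sb → ℝ), IsProb μ → Ex 0 P Q μ f = f (fun i => i.elim0) := by
        intro μ hμ
        unfold Ex
        rw [tsum_eq_single (fun i : Fin 0 => i.elim0) (fun b hb => absurd (huniq b) hb),
          rho_zero, hμ.2.tsum_eq, one_mul]
      rw [hEx ν hν, hEx ν' hν', sub_self, abs_zero]
      have hz : Lb (1 / (n:ℝ)) θ 0 = 0 := rfl
      rw [hz, mul_zero]
  | m + 1, P, Q, hP, hQ, hdob, ν, ν', hν, hν', f, hf => by
      have hn' : (0:ℝ) < n := by exact_mod_cast hn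
      have hP' : IsKer (fun k => P (k + 1)) := hP.shift
      have hQ' : IsKer (fun k => Q (k + 1)) := hQ.shift
      have hdob' : ∀ k, doeblinCoeff' ((fun k => P (k + 1)) k) ≤ θ := fun k => hdob (k + 1)
      have hprob0 : ∀ u, IsProb (fun v => P 0 v u) := fun u => ⟨(hP 0 u).1, (hP 0 u).2⟩
      set C := |f default| + (m + 1) / (n:ℝ) with hCdef
      have hC : ∀ x, |f x| ≤ C := by
        intro x
        have := lip_bounded hn hf x
        push_cast at this; exact this
      have hC0 : 0 ≤ C := le_trans (abs_nonneg _) (hC default)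
      set h : Sb → S → ℝ := fun u a => ∑' y, rhoTail m P Q u y * f (Fin.cons a y) with hhdef
      have hhEx : ∀ u a, h u a
          = Ex m (fun k => P (k + 1)) (fun k => Q (k + 1)) (fun v => P 0 v u)
              (fun y => f (Fin.cons a y)) := fun _ _ => rfl
      have hhb : ∀ u a, |h u a| ≤ C := by
        intro u a
        rw [hhEx]
        exact ex_abs_le m hP' hQ' (hprob0 u) (fun y => hC _)
      set g : Sb → ℝ := fun u => ∑' a, Q 0 a u * h u a with hgdef
      have hrep : ∀ (μ : Sb → ℝ), IsProb μ → Ex (m + 1) P Q μ f = ∑' u, μ u * g u := by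
        intro μ hμ
        exact tsum_rho_succ_mul m hP hQ hμ.1 hμ.2.summable hC0 hC
      -- summability of a ↦ Q 0 a w₁ * h w₂ a
      have hSa : ∀ w₁ w₂ : Sb, Summable (fun a => Q 0 a w₁ * h w₂ a) := by
        intro w₁ w₂
        apply Summable.of_abs
        apply Summable.of_nonneg_of_le (fun a => abs_nonneg _) _
          ((hQ 0 w₁).2.summable.mul_right C)
        intro a
        rw [abs_mul, abs_of_nonneg ((hQ 0 w₁).1 a)]
        exact mul_le_mul_of_nonneg_left (hhb w₂ a) ((hQ 0 w₁).1 a)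
      have hLbm0 : 0 ≤ Lb (1 / (n:ℝ)) θ m := Lb_nonneg (by positivity) hθ0 m
      have hosc : ∀ u u', |g u - g u'| ≤ 1 / n + θ * Lb (1 / n) θ m := by
        intro u u'
        have hT1 : |g u - ∑' a, Q 0 a u * h u' a| ≤ θ * Lb (1 / n) θ m := by
          have heq : g u - ∑' a, Q 0 a u * h u' a = ∑' a, Q 0 a u * (h u a - h u' a) := by
            rw [← Summable.tsum_sub (hSa u u) (hSa u u')]
            exact tsum_congr fun a => by ring
          rw [heq]
          have hsummable : Summable fun a => Q 0 a u * (h u a - h u' a) :=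
            ((hSa u u).sub (hSa u u')).congr fun a => by ring
          have hpt : ∀ a, |Q 0 a u * (h u a - h u' a)|
              ≤ Q 0 a u * (θ * Lb (1 / n) θ m) := by
            intro a
            rw [abs_mul, abs_of_nonneg ((hQ 0 u).1 a)]
            apply mul_le_mul_of_nonneg_left _ ((hQ 0 u).1 a)
            have hIH := lipA n hn θ hθ0 m (fun k => P (k + 1)) (fun k => Q (k + 1))
              hP' hQ' hdob' (fun v => P 0 v u) (fun v => P 0 v u')
              (hprob0 u) (hprob0 u') (fun y => f (Fin.cons a y)) (lip_cons hf a)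
            have htvθ : tv (fun v => P 0 v u) (fun v => P 0 v u') ≤ θ :=
              le_trans (tv_le_doeblin (hP 0) u u') (hdob 0)
            calc |h u a - h u' a|
                ≤ tv (fun v => P 0 v u) (fun v => P 0 v u') * Lb (1 / n) θ m := by
                  rw [hhEx, hhEx]; exact hIH
              _ ≤ θ * Lb (1 / n) θ m := mul_le_mul_of_nonneg_right htvθ hLbm0
          calc |∑' a, Q 0 a u * (h u a - h u' a)|
              ≤ ∑' a, |Q 0 a u * (h u a - h u' a)| := abs_tsum_le' hsummable.abs
            _ ≤ ∑' a, Q 0 a u * (θ * Lb (1 / n) θ m) :=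
                Summable.tsum_le_tsum hpt hsummable.abs ((hQ 0 u).2.summable.mul_right _)
            _ = 1 * (θ * Lb (1 / n) θ m) := by rw [tsum_mul_right, (hQ 0 u).2.tsum_eq]
            _ = θ * Lb (1 / n) θ m := one_mul _
        have hT2 : |(∑' a, Q 0 a u * h u' a) - g u'| ≤ 1 / n := by
          have hoscha : ∀ a a', |h u' a - h u' a'| ≤ 1 / n := by
            intro a a'
            rw [hhEx, hhEx]
            exact ex_sub_pointwise m hP' hQ' (hprob0 u') (fun y => hC _) (fun y => hC _)
              (fun y => lip_head hn hf a a' y)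
          have := tv_pair ⟨(hQ 0 u).1, (hQ 0 u).2⟩ ⟨(hQ  0 u').1, (hQ 0 u').2⟩
            (g := fun a => h u' a) (L := 1 / n) (by positivity) hoscha
          calc |(∑' a, Q 0 a u * h u' a) - g u'|
              ≤ tv (fun a => Q 0 a u) (fun a => Q 0 a u') * (1 / n) := this
            _ ≤ 1 * (1 / n) := mul_le_mul_of_nonneg_right
                (tv_le_one ⟨(hQ 0 u).1, (hQ 0 u).2⟩ ⟨(hQ 0 u').1, (hQ 0 u').2⟩)
                (by positivity)
            _ = 1 / n := one_mul _
        calc |g u - g u'| ≤ |g u - ∑' a, Q 0 a u * h u' a|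
              + |(∑' a, Q 0 a u * h u' a) - g u'| := abs_sub_le _ _ _
          _ ≤ θ * Lb (1 / n) θ m + 1 / n := add_le_add hT1 hT2
          _ = 1 / n + θ * Lb (1 / n) θ m := add_comm _ _
      have hL0 : (0:ℝ) ≤ 1 / n + θ * Lb (1 / n) θ m :=
        add_nonneg (by positivity) (mul_nonneg hθ0 hLbm0)
      have hmain := tv_pair hν hν' (g := g) (L := 1 / n + θ * Lb (1 / n) θ m) hL0 hosc
      rw [hrep ν hν, hrep ν' hν']
      have hLb : Lb (1 / (n:ℝ)) θ (m + 1) = 1 / n + θ * Lb (1 / n) θ m := rfl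
      rw [hLb]
      exact hmain


/-! ### Conditioning on the first observation -/

/-- Probability of first observation `a`. -/
def Za (ν : Sb → ℝ) (Q : ℕ → S → Sb → ℝ) (a : S) : ℝ := ∑' u, ν u * Q 0 a u

/-- Posterior law of the first hidden state given first observation `a`. -/
def postf (ν : Sb → ℝ) (Q : ℕ → S → Sb → ℝ) (a : S) (u : Sb) : ℝ :=
  if Za ν Q a = 0 then (if u = default then 1 else 0)
  else (Za ν Q a)⁻¹ * (ν u * Q 0 a u)

/-- Initial hidden law for the conditional (shifted) process given first observation `a`. -/
def muA (ν : Sb → ℝ) (P : ℕ → Sb → Sb → ℝ) (Q : ℕ → S → Sb → ℝ) (a : S) (v : Sb) : ℝ :=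
  ∑' u, postf ν Q a u * P 0 v u

section Cond

variable {P : ℕ → Sb → Sb → ℝ} {Q : ℕ → S → Sb → ℝ} {ν : Sb → ℝ}

lemma Qle1 (hQ : IsKer Q) (k : ℕ) (a : S) (u : Sb) : Q k a u ≤ 1 := by
  have := le_hasSum (hQ k u).2 a (fun b _ => (hQ k u).1 b)
  exact this

lemma Za_nonneg (hν : IsProb ν) (hQ : IsKer Q) (a : S) : 0 ≤ Za ν Q a :=
  tsum_nonneg fun u => mul_nonneg (hν.1 u) ((hQ 0 u).1 a)

lemma Za_summand_summable (hν : IsProb ν) (hQ : IsKer Q) (a : S) :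
    Summable fun u => ν u * Q 0 a u := by
  apply Summable.of_nonneg_of_le (fun u => mul_nonneg (hν.1 u) ((hQ 0 u).1 a)) _
    hν.2.summable
  intro u
  calc ν u * Q 0 a u ≤ ν u * 1 := mul_le_mul_of_nonneg_left (Qle1 hQ 0 a u) (hν.1 u)
    _ = ν u := mul_one _

lemma Za_hasSum_one (hν : IsProb ν) (hQ : IsKer Q) : HasSum (Za ν Q) 1 := by
  have h0 : ∀ u a, (0:ℝ) ≤ ν u * Q 0 a u := fun u a => mul_nonneg (hν.1 u) ((hQ 0 u).1 a)
  have h1 : ∀ u, Summable fun a => ν u * Q 0 a u :=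
    fun u => ((hQ 0 u).2.summable).mul_left (ν u)
  have h2 : Summable fun u => ∑' a, ν u * Q 0 a u := by
    apply Summable.congr hν.2.summable
    intro u
    rw [tsum_mul_left, (hQ 0 u).2.tsum_eq, mul_one]
  have hjoint : Summable fun p : Sb × S => ν p.1 * Q 0 p.2 p.1 :=
    summable_pair_of_nonneg h0 h1 h2
  have hZs : Summable (Za ν Q) :=
    ((summable_prod_of_nonneg (fun p => h0 p.2 p.1)).1 hjoint.prod_symm).2
  have hZt : ∑' a, Za ν Q a = 1 := by
    unfold Za
    rw [Summable.tsum_comm' (f := fun u a => ν u * Q 0 a u) hjoint h1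
      (fun a => hjoint.prod_symm.prod_factor a)]
    rw [show (∑' u, ∑' a, ν u * Q 0 a u) = ∑' u, ν u from
      tsum_congr fun u => by rw [tsum_mul_left, (hQ 0 u).2.tsum_eq, mul_one]]
    exact hν.2.tsum_eq
  exact hZs.hasSum_iff.2 hZt

lemma postf_isProb (hν : IsProb ν) (hQ : IsKer Q) (a : S) : IsProb (postf ν Q a) := by
  by_cases hz : Za ν Q a = 0
  · constructor
    · intro u; unfold postf; rw [if_pos hz]; by_cases h : u = default <;> simp [h]
    · have : postf ν Q a = fun u => if u = default then (1:ℝ) else 0 := by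
        funext u; unfold postf; rw [if_pos hz]
      rw [this]
      exact hasSum_ite_eq default 1
  · have hzpos : 0 < Za ν Q a := lt_of_le_of_ne (Za_nonneg hν hQ a) (Ne.symm hz)
    constructor
    · intro u; unfold postf; rw [if_neg hz]
      exact mul_nonneg (inv_nonneg.2 hzpos.le) (mul_nonneg (hν.1 u) ((hQ 0 u).1 a))
    · have hs : HasSum (fun u => ν u * Q 0 a u) (Za ν Q a) :=
        (Za_summand_summable hν hQ a).hasSum
      have := hs.mul_left (Za ν Q a)⁻¹
      rw [inv_mul_cancel₀ hz] at this
      have heq : postf ν Q a = fun u => (Za ν Q a)⁻¹ * (ν u * Q 0 a u) := by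
        funext u; unfold postf; rw [if_neg hz]
      rw [heq]
      exact this

lemma mix_isProb {α : Type*} (c : α → ℝ) (μ : α → Sb → ℝ) (hc0 : ∀ a, 0 ≤ c a)
    (hcs : HasSum c 1) (hμ : ∀ a, IsProb (μ a)) :
    IsProb (fun v => ∑' a, c a * μ a v) := by
  have h0 : ∀ a v, (0:ℝ) ≤ c a * μ a v := fun a v => mul_nonneg (hc0 a) ((hμ a).1 v)
  have h1 : ∀ a, Summable fun v => c a * μ a v := fun a => ((hμ a).2.summable).mul_left (c a)
  have h2 : Summable fun a => ∑' v, c a * μ a v := by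
    apply Summable.congr hcs.summable
    intro a
    rw [tsum_mul_left, (hμ a).2.tsum_eq, mul_one]
  have hjoint : Summable fun p : α × Sb => c p.1 * μ p.1 p.2 :=
    summable_pair_of_nonneg h0 h1 h2
  constructor
  · intro v; exact tsum_nonneg fun a => h0 a v
  · have hsumv : Summable fun v => ∑' a, c a * μ a v :=
      ((summable_prod_of_nonneg (fun p => h0 p.2 p.1)).1 hjoint.prod_symm).2
    apply hsumv.hasSum_iff.2
    rw [Summable.tsum_comm' (f := fun a v => c a * μ a v) hjoint h1
      (fun v => hjoint.prod_symm.prod_factor v)]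
    rw [show (∑' a, ∑' v, c a * μ a v) = ∑' a, c a from
      tsum_congr fun a => by rw [tsum_mul_left, (hμ a).2.tsum_eq, mul_one]]
    exact hcs.tsum_eq

lemma muA_isProb (hν : IsProb ν) (hP : IsKer P) (hQ : IsKer Q) (a : S) :
    IsProb (muA ν P Q a) :=
  mix_isProb (postf ν Q a) (fun u => fun v => P 0 v u) (postf_isProb hν hQ a).1
    (postf_isProb hν hQ a).2 (fun u => ⟨(hP 0 u).1, (hP 0 u).2⟩)

lemma rho_cons_eq (m : ℕ) (hP : IsKer P) (hQ : IsKer Q) (hν : IsProb ν) (a : S)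
    (y : Fin m → S) :
    rho (m + 1) P Q ν (Fin.cons a y)
      = Za ν Q a * rho m (fun k => P (k + 1)) (fun k => Q (k + 1)) (muA ν P Q a) y := by
  have hstep1 : rho (m + 1) P Q ν (Fin.cons a y)
      = ∑' u, (ν u * Q 0 a u) * rhoTail m P Q u y := by
    rw [rho_succ']
    refine tsum_congr fun u => ?_
    rw [show (Fin.cons a y : Fin (m+1) → S) 0 = a from rfl,
      show Fin.tail (Fin.cons a y : Fin (m+1) → S) = y from rfl]
    ring
  by_cases hz : Za ν Q a = 0
  · have hterm : ∀ u, ν u * Q 0 a u = 0 := by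
      intro u
      have hle : ν u * Q 0 a u ≤ Za ν Q a :=
        Summable.le_tsum (Za_summand_summable hν hQ a) u
          (fun b _ => mul_nonneg (hν.1 b) ((hQ 0 b).1 a))
      have hge : 0 ≤ ν u * Q 0 a u := mul_nonneg (hν.1 u) ((hQ 0 u).1 a)
      rw [hz] at hle
      linarith
    rw [hstep1, hz, zero_mul]
    rw [show (fun u => (ν u * Q 0 a u) * rhoTail m P Q u y) = fun _ => (0:ℝ) from
      funext fun u => by rw [hterm u, zero_mul]]
    exact tsum_zero
  · have hmix := rho_mix m hP.shift hQ.shift (fun u => ν u * Q 0 a u)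
      (fun u => fun v => P 0 v u) (fun u => mul_nonneg (hν.1 u) ((hQ 0 u).1 a))
      (Za_summand_summable hν hQ a) (fun u => ⟨(hP 0 u).1, (hP 0 u).2⟩) y
    have hμeq : (fun v => ∑' u, (ν u * Q 0 a u) * P 0 v u)
        = fun v => Za ν Q a * muA ν P Q a v := by
      funext v
      unfold muA
      have hpost : (fun u => postf ν Q a u * P 0 v u)
          = fun u => (Za ν Q a)⁻¹ * ((ν u * Q 0 a u) * P 0 v u) := by
        funext u
        unfold postf
        rw [if_neg hz]
        ring
      rw [hpost, tsum_mul_left, ← mul_assoc, mul_inv_cancel₀ hz, one_mul]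
    calc rho (m + 1) P Q ν (Fin.cons a y)
        = ∑' u, (ν u * Q 0 a u) * rhoTail m P Q u y := hstep1
      _ = rho m (fun k => P (k + 1)) (fun k => Q (k + 1))
            (fun v => ∑' u, (ν u * Q 0 a u) * P 0 v u) y := hmix.symm
      _ = rho m (fun k => P (k + 1)) (fun k => Q (k + 1))
            (fun v => Za ν Q a * muA ν P Q a v) y := by rw [hμeq]
      _ = Za ν Q a * rho m (fun k => P (k + 1)) (fun k => Q (k + 1)) (muA ν P Q a) y :=
          rho_smul m _ _ _ _ y

end Cond


section Cond2

variable {P : ℕ → Sb → Sb → ℝ} {Q : ℕ → S → Sb → ℝ} {ν : Sb → ℝ}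

lemma tsum_rho_cons_split (m : ℕ) (hP : IsKer P) (hQ : IsKer Q) (hν : IsProb ν)
    {w : (Fin (m + 1) → S) → ℝ} {C : ℝ} (hC0 : 0 ≤ C) (hw : ∀ x, |w x| ≤ C) :
    ∑' x, rho (m + 1) P Q ν x * w x
      = ∑' a, Za ν Q a * ∑' y, rho m (fun k => P (k + 1)) (fun k => Q (k + 1))
          (muA ν P Q a) y * w (Fin.cons a y) := by
  have hsum : Summable fun x => rho (m + 1) P Q ν x * w x :=
    ex_summable (m + 1) hP hQ hν.1 hν.2.summable hw
  rw [tsum_consE _ ((summable_consE_iff _).1 hsum)]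
  refine tsum_congr fun a => ?_
  rw [← tsum_mul_left]
  refine tsum_congr fun y => ?_
  rw [rho_cons_eq m hP hQ hν a y]
  ring

lemma ex_tower (m : ℕ) (hP : IsKer P) (hQ : IsKer Q) (hν : IsProb ν)
    {f : (Fin (m + 1) → S) → ℝ} {C : ℝ} (hC0 : 0 ≤ C) (hf : ∀ x, |f x| ≤ C) :
    Ex (m + 1) P Q ν f
      = ∑' a, Za ν Q a * Ex m (fun k => P (k + 1)) (fun k => Q (k + 1)) (muA ν P Q a)
          (fun y => f (Fin.cons a y)) :=
  tsum_rho_cons_split m hP hQ hν hC0 hf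

lemma F_osc (n : ℕ) (hn : 0 < n) (θ : ℝ) (hθ0 : 0 ≤ θ) (m : ℕ)
    (hP : IsKer P) (hQ : IsKer Q) (hdob : ∀ k, doeblinCoeff' (P k) ≤ θ) (hν : IsProb ν)
    {f : (Fin (m + 1) → S) → ℝ} (hf : Lip n f) (a a' : S) :
    |Ex m (fun k => P (k + 1)) (fun k => Q (k + 1)) (muA ν P Q a) (fun y => f (Fin.cons a y))
      - Ex m (fun k => P (k + 1)) (fun k => Q (k + 1)) (muA ν P Q a')
          (fun y => f (Fin.cons a' y))| ≤ 1 / n + θ * Lb (1 / n) θ m := by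
  have hn' : (0:ℝ) < n := by exact_mod_cast hn
  have hP' : IsKer (fun k => P (k + 1)) := hP.shift
  have hQ' : IsKer (fun k => Q (k + 1)) := hQ.shift
  have hdob' : ∀ k, doeblinCoeff' ((fun k => P (k + 1)) k) ≤ θ := fun k => hdob (k + 1)
  have hprob0 : ∀ u, IsProb (fun v => P 0 v u) := fun u => ⟨(hP 0 u).1, (hP 0 u).2⟩
  set C := |f default| + (m + 1) / (n:ℝ) with hCdef
  have hC : ∀ x, |f x| ≤ C := by
    intro x; have := lip_bounded hn hf x; push_cast at this; exact this
  have hC0 : 0 ≤ C := le_trans (abs_nonneg _) (hC default)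
  set h2 : Sb → S → ℝ := fun u b =>
    Ex m (fun k => P (k + 1)) (fun k => Q (k + 1)) (fun v => P 0 v u)
      (fun y => f (Fin.cons b y)) with hh2def
  have hhb : ∀ u b, |h2 u b| ≤ C := fun u b =>
    ex_abs_le m hP' hQ' (hprob0 u) (fun y => hC _)
  have hrep : ∀ b : S, Ex m (fun k => P (k + 1)) (fun k => Q (k + 1)) (muA ν P Q b)
      (fun y => f (Fin.cons b y)) = ∑' u, postf ν Q b u * h2 u b := by
    intro b
    have hμ : muA ν P Q b = fun v => ∑' u, postf ν Q b u * P 0 v u := rfl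
    rw [hμ]
    exact ex_mix m hP' hQ' (postf ν Q b) (fun u => fun v => P 0 v u)
      (postf_isProb hν hQ b).1 (postf_isProb hν hQ b).2.summable hprob0 hC0 (fun y => hC _)
  have hLbm0 : 0 ≤ Lb (1 / (n:ℝ)) θ m := Lb_nonneg (by positivity) hθ0 m
  have hSpost : ∀ b w₂ : S, Summable (fun u => postf ν Q b u * h2 u w₂) := by
    intro b w₂
    apply Summable.of_abs
    apply Summable.of_nonneg_of_le (fun u => abs_nonneg _) _
      ((postf_isProb hν hQ b).2.summable.mul_right C)
    intro u
    rw [abs_mul, abs_of_nonneg ((postf_isProb hν hQ b).1 u)]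
    exact mul_le_mul_of_nonneg_left (hhb u w₂) ((postf_isProb hν hQ b).1 u)
  rw [hrep a, hrep a']
  have hT1 : |(∑' u, postf ν Q a u * h2 u a) - ∑' u, postf ν Q a u * h2 u a'|
      ≤ 1 / n := by
    have heq : (∑' u, postf ν Q a u * h2 u a) - ∑' u, postf ν Q a u * h2 u a'
        = ∑' u, postf ν Q a u * (h2 u a - h2 u a') := by
      rw [← Summable.tsum_sub (hSpost a a) (hSpost a a')]
      exact tsum_congr fun u => by ring
    rw [heq]
    have hsummable : Summable fun u => postf ν Q a u * (h2 u a - h2 u a') :=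
      ((hSpost a a).sub (hSpost a a')).congr fun u => by ring
    have hpt : ∀ u, |postf ν Q a u * (h2 u a - h2 u a')| ≤ postf ν Q a u * (1 / n) := by
      intro u
      rw [abs_mul, abs_of_nonneg ((postf_isProb hν hQ a).1 u)]
      apply mul_le_mul_of_nonneg_left _ ((postf_isProb hν hQ a).1 u)
      exact ex_sub_pointwise m hP' hQ' (hprob0 u) (fun y => hC _) (fun y => hC _)
        (fun y => lip_head hn hf a a' y)
    calc |∑' u, postf ν Q a u * (h2 u a - h2 u a')|
        ≤ ∑' u, |postf ν Q a u * (h2 u a - h2 u a')| := abs_tsum_le' hsummable.abs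
      _ ≤ ∑' u, postf ν Q a u * (1 / n) :=
          Summable.tsum_le_tsum hpt hsummable.abs
            ((postf_isProb hν hQ a).2.summable.mul_right _)
      _ = 1 * (1 / n) := by
          rw [tsum_mul_right, (postf_isProb hν hQ a).2.tsum_eq]
      _ = 1 / n := one_mul _
  have hT2 : |(∑' u, postf ν Q a u * h2 u a') - ∑' u, postf ν Q a' u * h2 u a'|
      ≤ θ * Lb (1 / n) θ m := by
    have hosch : ∀ u u', |h2 u a' - h2 u' a'| ≤ θ * Lb (1 / n) θ m := by
      intro u u'
      have hIH := lipA n hn θ hθ0 m (fun k => P (k + 1)) (fun k => Q (k + 1))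
        hP' hQ' hdob' (fun v => P 0 v u) (fun v => P 0 v u')
        (hprob0 u) (hprob0 u') (fun y => f (Fin.cons a' y)) (lip_cons hf a')
      have htvθ : tv (fun v => P 0 v u) (fun v => P 0 v u') ≤ θ :=
        le_trans (tv_le_doeblin (hP 0) u u') (hdob 0)
      calc |h2 u a' - h2 u' a'|
          ≤ tv (fun v => P 0 v u) (fun v => P 0 v u') * Lb (1 / n) θ m := hIH
        _ ≤ θ * Lb (1 / n) θ m := mul_le_mul_of_nonneg_right htvθ hLbm0
    have := tv_pair (postf_isProb hν hQ a) (postf_isProb hν hQ a')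
      (g := fun u => h2 u a') (L := θ * Lb (1 / n) θ m)
      (mul_nonneg hθ0 hLbm0) hosch
    calc |(∑' u, postf ν Q a u * h2 u a') - ∑' u, postf ν Q a' u * h2 u a'|
        ≤ tv (postf ν Q a) (postf ν Q a') * (θ * Lb (1 / n) θ m) := by simpa using this
      _ ≤ 1 * (θ * Lb (1 / n) θ m) := mul_le_mul_of_nonneg_right
          (tv_le_one (postf_isProb hν hQ a) (postf_isProb hν hQ a'))
          (mul_nonneg hθ0 hLbm0)
      _ = θ * Lb (1 / n) θ m := one_mul _
  calc |(∑' u, postf ν Q a u * h2 u a) - ∑' u, postf ν Q a' u * h2 u a'|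
      ≤ |(∑' u, postf ν Q a u * h2 u a) - ∑' u, postf ν Q a u * h2 u a'|
        + |(∑' u, postf ν Q a u * h2 u a') - ∑' u, postf ν Q a' u * h2 u a'| :=
        abs_sub_le _ _ _
    _ ≤ 1 / n + θ * Lb (1 / n) θ m := add_le_add hT1 hT2

end Cond2

/-- Hoeffding-type step: a probability-weighted exponential of a centered,
bounded family is at most the Gaussian bound. -/
lemma hoeffding_step {α : Type*} (w : α → ℝ) (V : α → ℝ) (hw0 : ∀ a, 0 ≤ w a)
    (hws : HasSum w 1) {K : ℝ} (hK : 0 < K) (hKb : ∀ a, |V a| ≤ K)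
    (hVs : Summable fun a => w a * V a) (hmean : ∑' a, w a * V a = 0) (c : ℝ) :
    ∑' a, w a * Real.exp (c * V a) ≤ Real.exp (c ^ 2 * K ^ 2 / 2) := by
  by_cases hc : c = 0
  · subst hc
    simp only [zero_mul, Real.exp_zero, mul_one]
    rw [hws.tsum_eq]
    norm_num
  · have hB : 0 < |c| * K := mul_pos (abs_pos.2 hc) hK
    have hchord : ∀ a, Real.exp (c * V a)
        ≤ Real.cosh (|c| * K) + (c * V a) * Real.sinh (|c| * K) / (|c| * K) := by
      intro a
      apply exp_le_chord hB
      rw [abs_mul]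
      exact mul_le_mul_of_nonneg_left (hKb a) (abs_nonneg c)
    have hexp_le : ∀ a, Real.exp (c * V a) ≤ Real.exp (|c| * K) := by
      intro a
      apply Real.exp_le_exp.2
      calc c * V a ≤ |c * V a| := le_abs_self _
        _ = |c| * |V a| := abs_mul _ _
        _ ≤ |c| * K := mul_le_mul_of_nonneg_left (hKb a) (abs_nonneg c)
    have hsum1 : Summable fun a => w a * Real.exp (c * V a) := by
      apply Summable.of_nonneg_of_le
        (fun a => mul_nonneg (hw0 a) (Real.exp_pos _).le)
        (fun a => mul_le_mul_of_nonneg_left (hexp_le a) (hw0 a))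
        (hws.summable.mul_right _)
    have hsum2 : Summable fun a => w a * Real.cosh (|c| * K)
        + (c * Real.sinh (|c| * K) / (|c| * K)) * (w a * V a) :=
      (hws.summable.mul_right _).add (hVs.mul_left _)
    calc ∑' a, w a * Real.exp (c * V a)
        ≤ ∑' a, (w a * Real.cosh (|c| * K)
            + (c * Real.sinh (|c| * K) / (|c| * K)) * (w a * V a)) := by
          apply Summable.tsum_le_tsum _ hsum1 hsum2
          intro a
          calc w a * Real.exp (c * V a)
              ≤ w a * (Real.cosh (|c| * K) + (c * V a) * Real.sinh (|c| * K) / (|c| * K)) :=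
                mul_le_mul_of_nonneg_left (hchord a) (hw0 a)
            _ = w a * Real.cosh (|c| * K)
                + (c * Real.sinh (|c| * K) / (|c| * K)) * (w a * V a) := by ring
      _ = Real.cosh (|c| * K) + (c * Real.sinh (|c| * K) / (|c| * K)) * 0 := by
          rw [Summable.tsum_add (hws.summable.mul_right _) (hVs.mul_left _),
            tsum_mul_right, tsum_mul_left, hws.tsum_eq, hmean, one_mul]
      _ = Real.cosh (|c| * K) := by ring
      _ ≤ Real.exp ((|c| * K) ^ 2 / 2) := Real.cosh_le_exp_half_sq _
      _ = Real.exp (c ^ 2 * K ^ 2 / 2) := by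
          congr 1
          rw [mul_pow, sq_abs]


/-! ### The moment generating function bound -/

lemma mgf (n : ℕ) (hn : 0 < n) (θ : ℝ) (hθ0 : 0 ≤ θ) (hθ1 : θ < 1) :
    ∀ (m : ℕ) (P : ℕ → Sb → Sb → ℝ) (Q : ℕ → S → Sb → ℝ),
    IsKer P → IsKer Q → (∀ k, doeblinCoeff' (P k) ≤ θ) →
    ∀ (ν : Sb → ℝ), IsProb ν →
    ∀ (f : (Fin m → S) → ℝ), Lip n f → ∀ c : ℝ,
    ∑' x, rho m P Q ν x * Real.exp (c * (f x - Ex m P Q ν f))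
      ≤ Real.exp (c ^ 2 * m * (1 / (n * (1 - θ))) ^ 2 / 2)
  | 0, P, Q, hP, hQ, hdob, ν, hν, f, hf, c => by
      have huniq : ∀ x : Fin 0 → S, x = (fun i => i.elim0) :=
        fun x => funext fun i => i.elim0
      have hEx : Ex 0 P Q ν f = f (fun i => i.elim0) := by
        unfold Ex
        rw [tsum_eq_single (fun i : Fin 0 => i.elim0) (fun b hb => absurd (huniq b) hb),
          rho_zero, hν.2.tsum_eq, one_mul]
      rw [tsum_eq_single (fun i : Fin 0 => i.elim0) (fun b hb => absurd (huniq b) hb),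
        rho_zero, hν.2.tsum_eq, one_mul, hEx, sub_self, mul_zero, Real.exp_zero]
      have : (0:ℝ) ≤ c ^ 2 * (0:ℕ) * (1 / (n * (1 - θ))) ^ 2 / 2 := by
        norm_num
      exact Real.one_le_exp this
  | m + 1, P, Q, hP, hQ, hdob, ν, hν, f, hf, c => by
      have hn' : (0:ℝ) < n := by exact_mod_cast hn
      have h1θ : (0:ℝ) < 1 - θ := by linarith
      have hKpos : (0:ℝ) < 1 / (n * (1 - θ)) := by positivity
      have hP' : IsKer (fun k => P (k + 1)) := hP.shift
      have hQ' : IsKer (fun k => Q (k + 1)) := hQ.shift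
      have hdob' : ∀ k, doeblinCoeff' ((fun k => P (k + 1)) k) ≤ θ := fun k => hdob (k + 1)
      set C := |f default| + (m + 1) / (n:ℝ) with hCdef
      have hC : ∀ x, |f x| ≤ C := by
        intro x; have := lip_bounded hn hf x; push_cast at this; exact this
      have hC0 : 0 ≤ C := le_trans (abs_nonneg _) (hC default)
      set E := Ex (m + 1) P Q ν f with hEdef
      set F : S → ℝ := fun a => Ex m (fun k => P (k + 1)) (fun k => Q (k + 1)) (muA ν P Q a)
        (fun y => f (Fin.cons a y)) with hFdef
      -- induction hypothesis
      have hIH : ∀ a : S,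
          ∑' y, rho m (fun k => P (k + 1)) (fun k => Q (k + 1)) (muA ν P Q a) y *
            Real.exp (c * (f (Fin.cons a y) - F a))
          ≤ Real.exp (c ^ 2 * m * (1 / (n * (1 - θ))) ^ 2 / 2) := by
        intro a
        have := mgf n hn θ hθ0 hθ1 m (fun k => P (k + 1)) (fun k => Q (k + 1))
          hP' hQ' hdob' (muA ν P Q a) (muA_isProb hν hP hQ a)
          (fun y => f (Fin.cons a y)) (lip_cons hf a) c
        simpa only [hFdef] using this
      -- tower property
      have htower : E = ∑' a, Za ν Q a * F a := by
        rw [hEdef]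
        simp only [hFdef]
        exact ex_tower m hP hQ hν hC0 hC
      have hFb : ∀ a, |F a| ≤ C := by
        intro a
        rw [hFdef]
        exact ex_abs_le m hP' hQ' (muA_isProb hν hP hQ a) (fun y => hC _)
      have hEb : |E| ≤ C := by
        rw [hEdef]
        exact ex_abs_le (m + 1) hP hQ hν hC
      -- oscillation of F at scale 1/(n(1-θ))
      have hLK : 1 / (n:ℝ) + θ * Lb (1 / n) θ m ≤ 1 / (n * (1 - θ)) := by
        have h1 := Lb_le (c := 1 / (n:ℝ)) (by positivity) hθ0 hθ1 (m + 1)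
        have h2 : Lb (1 / (n:ℝ)) θ (m + 1) = 1 / n + θ * Lb (1 / n) θ m := rfl
        rw [h2] at h1
        calc 1 / (n:ℝ) + θ * Lb (1 / n) θ m ≤ (1 / n) / (1 - θ) := h1
          _ = 1 / (n * (1 - θ)) := by rw [div_div]
      have hFosc : ∀ a a', |F a - F a'| ≤ 1 / (n * (1 - θ)) := by
        intro a a'
        refine le_trans ?_ hLK
        rw [hFdef]
        exact F_osc n hn θ hθ0 m hP hQ hdob hν hf a a'
      have hZ0 : ∀ a, 0 ≤ Za ν Q a := Za_nonneg hν hQ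
      have hZ1 : HasSum (Za ν Q) 1 := Za_hasSum_one hν hQ
      have hZF : Summable fun a => Za ν Q a * F a := by
        apply Summable.of_abs
        apply Summable.of_nonneg_of_le (fun a => abs_nonneg _) _ (hZ1.summable.mul_right C)
        intro a
        rw [abs_mul, abs_of_nonneg (hZ0 a)]
        exact mul_le_mul_of_nonneg_left (hFb a) (hZ0 a)
      -- centered bound
      have hFE : ∀ a, |F a - E| ≤ 1 / (n * (1 - θ)) := by
        intro a
        have h1 : Summable fun a' => Za ν Q a' * F a := hZ1.summable.mul_right (F a)
        have e1 : ∑' a', Za ν Q a' * F a = F a := by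
          rw [tsum_mul_right, hZ1.tsum_eq, one_mul]
        have e2 : F a - E = ∑' a', Za ν Q a' * (F a - F a') := by
          calc F a - E = (∑' a', Za ν Q a' * F a) - ∑' a', Za ν Q a' * F a' := by
                rw [e1, ← htower]
            _ = ∑' a', (Za ν Q a' * F a - Za ν Q a' * F a') := (Summable.tsum_sub h1 hZF).symm
            _ = ∑' a', Za ν Q a' * (F a - F a') := tsum_congr fun a' => by ring
        rw [e2]
        have hsummable : Summable fun a' => Za ν Q a' * (F a - F a') :=
          (h1.sub hZF).congr fun a' => by ring
        calc |∑' a', Za ν Q a' * (F a - F a')| ≤ ∑' a', |Za ν Q a' * (F a - F a')| :=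
              abs_tsum_le' hsummable.abs
          _ ≤ ∑' a', Za ν Q a' * (1 / (n * (1 - θ))) := by
              apply Summable.tsum_le_tsum _ hsummable.abs (hZ1.summable.mul_right _)
              intro a'
              rw [abs_mul, abs_of_nonneg (hZ0 a')]
              exact mul_le_mul_of_nonneg_left (hFosc a a') (hZ0 a')
          _ = 1 * (1 / (n * (1 - θ))) := by rw [tsum_mul_right, hZ1.tsum_eq]
          _ = 1 / (n * (1 - θ)) := one_mul _
      -- the weight function is bounded
      have hW : ∀ x, |Real.exp (c * (f x - E))| ≤ Real.exp (|c| * (2 * C)) := by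
        intro x
        rw [abs_of_pos (Real.exp_pos _)]
        apply Real.exp_le_exp.2
        calc c * (f x - E) ≤ |c * (f x - E)| := le_abs_self _
          _ = |c| * |f x - E| := abs_mul _ _
          _ ≤ |c| * (2 * C) := by
              apply mul_le_mul_of_nonneg_left _ (abs_nonneg c)
              calc |f x - E| ≤ |f x| + |E| := abs_sub _ _
                _ ≤ C + C := add_le_add (hC x) hEb
                _ = 2 * C := by ring
      -- splitting of the mgf sum
      have hsplit : ∑' x, rho (m + 1) P Q ν x * Real.exp (c * (f x - E))
          = ∑' a, Za ν Q a * ∑' y,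
              rho m (fun k => P (k + 1)) (fun k => Q (k + 1)) (muA ν P Q a) y *
                Real.exp (c * (f (Fin.cons a y) - E)) :=
        tsum_rho_cons_split m hP hQ hν (Real.exp_pos _).le hW
      have hinner : ∀ a, (∑' y,
            rho m (fun k => P (k + 1)) (fun k => Q (k + 1)) (muA ν P Q a) y *
              Real.exp (c * (f (Fin.cons a y) - E)))
          = Real.exp (c * (F a - E)) * ∑' y,
              rho m (fun k => P (k + 1)) (fun k => Q (k + 1)) (muA ν P Q a) y *
                Real.exp (c * (f (Fin.cons a y) - F a)) := by
        intro a
        rw [← tsum_mul_left]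
        refine tsum_congr fun y => ?_
        have harg : c * (f (Fin.cons a y) - E)
            = c * (F a - E) + c * (f (Fin.cons a y) - F a) := by ring
        rw [harg, Real.exp_add]
        ring
      set M : S → ℝ := fun a => ∑' y,
          rho m (fun k => P (k + 1)) (fun k => Q (k + 1)) (muA ν P Q a) y *
            Real.exp (c * (f (Fin.cons a y) - F a)) with hMdef
      have hM0 : ∀ a, 0 ≤ M a := by
        intro a
        rw [hMdef]
        exact tsum_nonneg fun y => mul_nonneg
          (rho_nonneg m _ _ hP' hQ' _ (muA_isProb hν hP hQ a).1 y) (Real.exp_pos _).le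
      have hMB : ∀ a, M a ≤ Real.exp (c ^ 2 * m * (1 / (n * (1 - θ))) ^ 2 / 2) := by
        intro a
        rw [hMdef]
        exact hIH a
      have hexpFE : ∀ a, Real.exp (c * (F a - E)) ≤ Real.exp (|c| * (1 / (n * (1 - θ)))) := by
        intro a
        apply Real.exp_le_exp.2
        calc c * (F a - E) ≤ |c * (F a - E)| := le_abs_self _
          _ = |c| * |F a - E| := abs_mul _ _
          _ ≤ |c| * (1 / (n * (1 - θ))) :=
              mul_le_mul_of_nonneg_left (hFE a) (abs_nonneg c)
      have hs1 : Summable fun a => Za ν Q a * (Real.exp (c * (F a - E)) * M a) := by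
        apply Summable.of_nonneg_of_le
          (fun a => mul_nonneg (hZ0 a) (mul_nonneg (Real.exp_pos _).le (hM0 a)))
          _ (hZ1.summable.mul_right (Real.exp (|c| * (1 / (n * (1 - θ)))) *
            Real.exp (c ^ 2 * m * (1 / (n * (1 - θ))) ^ 2 / 2)))
        intro a
        apply mul_le_mul_of_nonneg_left _ (hZ0 a)
        exact mul_le_mul (hexpFE a) (hMB a) (hM0 a) (Real.exp_pos _).le
      have hs2 : Summable fun a => Za ν Q a * (Real.exp (c * (F a - E)) *
          Real.exp (c ^ 2 * m * (1 / (n * (1 - θ))) ^ 2 / 2)) := by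
        apply Summable.of_nonneg_of_le
          (fun a => mul_nonneg (hZ0 a) (mul_nonneg (Real.exp_pos _).le (Real.exp_pos _).le))
          _ (hZ1.summable.mul_right (Real.exp (|c| * (1 / (n * (1 - θ)))) *
            Real.exp (c ^ 2 * m * (1 / (n * (1 - θ))) ^ 2 / 2)))
        intro a
        apply mul_le_mul_of_nonneg_left _ (hZ0 a)
        exact mul_le_mul_of_nonneg_right (hexpFE a) (Real.exp_pos _).le
      -- Hoeffding step
      have hVs : Summable fun a => Za ν Q a * (F a - E) :=
        (hZF.sub (hZ1.summable.mul_right E)).congr fun a => by ring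
      have hmean : ∑' a, Za ν Q a * (F a - E) = 0 := by
        have : ∑' a, Za ν Q a * (F a - E)
            = (∑' a, Za ν Q a * F a) - ∑' a, Za ν Q a * E := by
          rw [← Summable.tsum_sub hZF (hZ1.summable.mul_right E)]
          exact tsum_congr fun a => by ring
        rw [this, tsum_mul_right, hZ1.tsum_eq, one_mul, ← htower, sub_self]
      have hhoeff := hoeffding_step (Za ν Q) (fun a => F a - E) hZ0 hZ1 hKpos hFE hVs hmean c
      -- put everything together
      calc ∑' x, rho (m + 1) P Q ν x * Real.exp (c * (f x - E))
          = ∑' a, Za ν Q a * (Real.exp (c * (F a - E)) * M a) := by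
            rw [hsplit]
            exact tsum_congr fun a => by rw [hinner a, hMdef]
        _ ≤ ∑' a, Za ν Q a * (Real.exp (c * (F a - E)) *
              Real.exp (c ^ 2 * m * (1 / (n * (1 - θ))) ^ 2 / 2)) := by
            apply Summable.tsum_le_tsum _ hs1 hs2
            intro a
            apply mul_le_mul_of_nonneg_left _ (hZ0 a)
            exact mul_le_mul_of_nonneg_left (hMB a) (Real.exp_pos _).le
        _ = Real.exp (c ^ 2 * m * (1 / (n * (1 - θ))) ^ 2 / 2) *
              ∑' a, Za ν Q a * Real.exp (c * (F a - E)) := by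
            rw [← tsum_mul_left]
            exact tsum_congr fun a => by ring
        _ ≤ Real.exp (c ^ 2 * m * (1 / (n * (1 - θ))) ^ 2 / 2) *
              Real.exp (c ^ 2 * (1 / (n * (1 - θ))) ^ 2 / 2) := by
            apply mul_le_mul_of_nonneg_left _ (Real.exp_pos _).le
            exact hhoeff
        _ = Real.exp (c ^ 2 * (m + 1 : ℕ) * (1 / (n * (1 - θ))) ^ 2 / 2) := by
            rw [← Real.exp_add]
            congr 1
            push_cast
            ring

/-! ### Bridge to the `hmmMeasure` formulation -/

lemma pad_zero {α : Type*} [Inhabited α] {m : ℕ} (x : Fin (m + 1) → α) :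
    pad x 0 = x 0 := by
  unfold pad
  rw [dif_pos (Nat.succ_pos m)]
  congr 1

lemma pad_cons_zero {α : Type*} [Inhabited α] {m : ℕ} (u : α) (yb : Fin m → α) :
    pad (Fin.cons u yb : Fin (m + 1) → α) 0 = u := by
  unfold pad
  rw [dif_pos (Nat.succ_pos m)]
  have h0 : (⟨0, Nat.succ_pos m⟩ : Fin (m + 1)) = 0 := Fin.mk_zero
  rw [h0]
  exact Fin.cons_zero (α := fun _ : Fin (m + 1) => α) u yb

lemma pad_cons_succ {α : Type*} [Inhabited α] {m : ℕ} (u : α) (yb : Fin m → α) (k : ℕ) :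
    pad (Fin.cons u yb : Fin (m + 1) → α) (k + 1) = pad yb k := by
  unfold pad
  by_cases h : k < m
  · rw [dif_pos (Nat.succ_lt_succ h), dif_pos h]
    exact Fin.cons_succ (α := fun _ : Fin (m + 1) => α) u yb ⟨k, h⟩
  · rw [dif_neg (fun hc => h (Nat.lt_of_succ_lt_succ hc)), dif_neg h]

lemma pad_tail {α : Type*} [Inhabited α] {m : ℕ} (x : Fin (m + 1) → α) (l : ℕ) :
    pad (Fin.tail x) l = pad x (l + 1) := by
  unfold pad
  by_cases h : l < m
  · rw [dif_pos h, dif_pos (Nat.succ_lt_succ h)]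
    rfl
  · rw [dif_neg h, dif_neg (fun hc => h (Nat.lt_of_succ_lt_succ hc))]

set_option maxHeartbeats 2000000 in
lemma bigsum_eq_rho : ∀ (m : ℕ) (P : ℕ → Sb → Sb → ℝ) (Q : ℕ → S → Sb → ℝ),
    IsKer P → IsKer Q → ∀ (ν : Sb → ℝ), (∀ u, 0 ≤ ν u) → Summable ν →
    ∀ (x : Fin (m + 1) → S),
    Summable (fun xb : Fin (m + 1) → Sb =>
        (ν (pad xb 0) * ∏ k ∈ Finset.range m, P k (pad xb (k + 1)) (pad xb k)) *
          ∏ l ∈ Finset.range (m + 1), Q l (pad x l) (pad xb l)) ∧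
    ∑' xb : Fin (m + 1) → Sb,
        (ν (pad xb 0) * ∏ k ∈ Finset.range m, P k (pad xb (k + 1)) (pad xb k)) *
          ∏ l ∈ Finset.range (m + 1), Q l (pad x l) (pad xb l)
      = rho (m + 1) P Q ν x
  | 0, P, Q, hP, hQ, ν, hν0, hνs, x => by
      have hval : ∀ xb : Fin 1 → Sb,
          (ν (pad xb 0) * ∏ k ∈ Finset.range 0, P k (pad xb (k + 1)) (pad xb k)) *
            ∏ l ∈ Finset.range 1, Q l (pad x l) (pad xb l)
          = ν (xb 0) * Q 0 (x 0) (xb 0) := by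
        intro xb
        rw [Finset.prod_range_zero, Finset.prod_range_one, pad_zero, pad_zero]
        ring
      have hrho : rho 1 P Q ν x = ∑' u, ν u * Q 0 (x 0) u := by
        rw [rho_succ]
        refine tsum_congr fun u => ?_
        rw [show rho 0 (fun k => P (k + 1)) (fun k => Q (k + 1)) (fun v => P 0 v u)
            (Fin.tail x) = ∑' v, P 0 v u from rfl, (hP 0 u).2.tsum_eq]
        ring
      have hsummand : Summable fun u : Sb => ν u * Q 0 (x 0) u := by
        apply Summable.of_nonneg_of_le (fun u => mul_nonneg (hν0 u) ((hQ 0 u).1 _)) _ hνs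
        intro u
        calc ν u * Q 0 (x 0) u ≤ ν u * 1 :=
              mul_le_mul_of_nonneg_left (Qle1 hQ 0 (x 0) u) (hν0 u)
          _ = ν u := mul_one _
      constructor
      · apply Summable.congr _ (fun xb => (hval xb).symm)
        apply ((Equiv.funUnique (Fin 1) Sb).symm.summable_iff
          (f := fun xb : Fin 1 → Sb => ν (xb 0) * Q 0 (x 0) (xb 0))).1
        exact hsummand
      · calc ∑' xb : Fin 1 → Sb,
              (ν (pad xb 0) * ∏ k ∈ Finset.range 0, P k (pad xb (k + 1)) (pad xb k)) *
                ∏ l ∈ Finset.range 1, Q l (pad x l) (pad xb l)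
            = ∑' xb : Fin 1 → Sb, ν (xb 0) * Q 0 (x 0) (xb 0) := tsum_congr hval
          _ = ∑' u : Sb, ν u * Q 0 (x 0) u :=
              ((Equiv.funUnique (Fin 1) Sb).symm.tsum_eq
                (fun xb : Fin 1 → Sb => ν (xb 0) * Q 0 (x 0) (xb 0))).symm
          _ = rho 1 P Q ν x := hrho.symm
  | m + 1, P, Q, hP, hQ, ν, hν0, hνs, x => by
      have hP' : IsKer (fun k => P (k + 1)) := hP.shift
      have hQ' : IsKer (fun k => Q (k + 1)) := hQ.shift
      have hIH := fun u => bigsum_eq_rho m (fun k => P (k + 1)) (fun k => Q (k + 1))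
        hP' hQ' (fun v => P 0 v u) (hP 0 u).1 (hP 0 u).2.summable (Fin.tail x)
      -- the summand evaluated at a cons
      have hkey : ∀ (u : Sb) (yb : Fin (m + 1) → Sb),
          (ν (pad (Fin.cons u yb : Fin (m+2) → Sb) 0) *
              ∏ k ∈ Finset.range (m + 1), P k (pad (Fin.cons u yb : Fin (m+2) → Sb) (k + 1))
                (pad (Fin.cons u yb : Fin (m+2) → Sb) k)) *
            ∏ l ∈ Finset.range (m + 2), Q l (pad x l) (pad (Fin.cons u yb : Fin (m+2) → Sb) l)
          = (ν u * Q 0 (pad x 0) u) *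
              (((fun v => P 0 v u) (pad yb 0) *
                ∏ k ∈ Finset.range m, P (k + 1) (pad yb (k + 1)) (pad yb k)) *
              ∏ l ∈ Finset.range (m + 1), Q (l + 1) (pad (Fin.tail x) l) (pad yb l)) := by
        intro u yb
        rw [pad_cons_zero]
        rw [Finset.prod_range_succ' (fun k => P k (pad (Fin.cons u yb : Fin (m+2) → Sb) (k + 1))
          (pad (Fin.cons u yb : Fin (m+2) → Sb) k)) m]
        rw [Finset.prod_range_succ' (fun l => Q l (pad x l)
          (pad (Fin.cons u yb : Fin (m+2) → Sb) l)) (m + 1)]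
        rw [pad_cons_zero]
        have hprodP : ∏ k ∈ Finset.range m,
            P (k + 1) (pad (Fin.cons u yb : Fin (m+2) → Sb) (k + 1 + 1))
              (pad (Fin.cons u yb : Fin (m+2) → Sb) (k + 1))
            = ∏ k ∈ Finset.range m, P (k + 1) (pad yb (k + 1)) (pad yb k) := by
          refine Finset.prod_congr rfl fun k _ => ?_
          rw [pad_cons_succ, pad_cons_succ]
        have hprodQ : ∏ l ∈ Finset.range (m + 1),
            Q (l + 1) (pad x (l + 1)) (pad (Fin.cons u yb : Fin (m+2) → Sb) (l + 1))
            = ∏ l ∈ Finset.range (m + 1), Q (l + 1) (pad (Fin.tail x) l) (pad yb l) := by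
          refine Finset.prod_congr rfl fun l _ => ?_
          rw [pad_cons_succ, pad_tail]
        rw [hprodP, hprodQ, pad_cons_succ]
        ring
      -- nonnegativity of the inner summand
      have hT0 : ∀ (u : Sb) (yb : Fin (m + 1) → Sb),
          0 ≤ ((fun v => P 0 v u) (pad yb 0) *
              ∏ k ∈ Finset.range m, P (k + 1) (pad yb (k + 1)) (pad yb k)) *
            ∏ l ∈ Finset.range (m + 1), Q (l + 1) (pad (Fin.tail x) l) (pad yb l) := by
        intro u yb
        apply mul_nonneg (mul_nonneg ((hP 0 u).1 _) _) _
        · exact Finset.prod_nonneg fun k _ => (hP (k + 1) _).1 _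
        · exact Finset.prod_nonneg fun l _ => (hQ (l + 1) _).1 _
      have hRle1 : ∀ u, rho (m + 1) (fun k => P (k + 1)) (fun k => Q (k + 1))
          (fun v => P 0 v u) (Fin.tail x) ≤ 1 :=
        fun u => rho_le_one (m + 1) hP' hQ' ⟨(hP 0 u).1, (hP 0 u).2⟩ _
      have hRge0 : ∀ u, 0 ≤ rho (m + 1) (fun k => P (k + 1)) (fun k => Q (k + 1))
          (fun v => P 0 v u) (Fin.tail x) :=
        fun u => rho_nonneg (m + 1) _ _ hP' hQ' _ (hP 0 u).1 _
      -- joint summability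
      have hjoint : Summable fun p : Sb × (Fin (m + 1) → Sb) =>
          (ν p.1 * Q 0 (pad x 0) p.1) *
            (((fun v => P 0 v p.1) (pad p.2 0) *
              ∏ k ∈ Finset.range m, P (k + 1) (pad p.2 (k + 1)) (pad p.2 k)) *
            ∏ l ∈ Finset.range (m + 1), Q (l + 1) (pad (Fin.tail x) l) (pad p.2 l)) := by
        apply summable_pair_of_nonneg
          (fun u yb => mul_nonneg (mul_nonneg (hν0 u) ((hQ 0 u).1 _)) (hT0 u yb))
        · intro u
          exact ((hIH u).1).mul_left _
        · apply Summable.of_nonneg_of_le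
            (fun u => tsum_nonneg fun yb =>
              mul_nonneg (mul_nonneg (hν0 u) ((hQ 0 u).1 _)) (hT0 u yb)) _ hνs
          intro u
          rw [tsum_mul_left, (hIH u).2]
          calc (ν u * Q 0 (pad x 0) u) *
              rho (m + 1) (fun k => P (k + 1)) (fun k => Q (k + 1))
                (fun v => P 0 v u) (Fin.tail x)
              ≤ (ν u * 1) * 1 := by
                apply mul_le_mul _ (hRle1 u) (hRge0 u)
                  (mul_nonneg (hν0 u) (by norm_num))
                exact mul_le_mul_of_nonneg_left (Qle1 hQ 0 (pad x 0) u) (hν0 u)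
            _ = ν u := by ring
      have hjoint' : Summable fun p : Sb × (Fin (m + 1) → Sb) =>
          (ν (pad (Fin.cons p.1 p.2 : Fin (m+2) → Sb) 0) *
              ∏ k ∈ Finset.range (m + 1),
                P k (pad (Fin.cons p.1 p.2 : Fin (m+2) → Sb) (k + 1))
                  (pad (Fin.cons p.1 p.2 : Fin (m+2) → Sb) k)) *
            ∏ l ∈ Finset.range (m + 2), Q l (pad x l)
              (pad (Fin.cons p.1 p.2 : Fin (m+2) → Sb) l) :=
        hjoint.congr fun p => (hkey p.1 p.2).symm
      constructor
      · rw [summable_consE_iff]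
        exact hjoint'
      · rw [tsum_consE _ hjoint']
        calc ∑' u, ∑' yb,
              (ν (pad (Fin.cons u yb : Fin (m+2) → Sb) 0) *
                  ∏ k ∈ Finset.range (m + 1),
                    P k (pad (Fin.cons u yb : Fin (m+2) → Sb) (k + 1))
                      (pad (Fin.cons u yb : Fin (m+2) → Sb) k)) *
                ∏ l ∈ Finset.range (m + 2), Q l (pad x l)
                  (pad (Fin.cons u yb : Fin (m+2) → Sb) l)
            = ∑' u, ∑' yb : Fin (m + 1) → Sb, (ν u * Q 0 (pad x 0) u) *
                (((fun v => P 0 v u) (pad yb 0) *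
                  ∏ k ∈ Finset.range m, P (k + 1) (pad yb (k + 1)) (pad yb k)) *
                ∏ l ∈ Finset.range (m + 1), Q (l + 1) (pad (Fin.tail x) l) (pad yb l)) :=
              tsum_congr fun u => tsum_congr fun yb => hkey u yb
          _ = ∑' u, ν u * (Q 0 (x 0) u * rho (m + 1) (fun k => P (k + 1))
                (fun k => Q (k + 1)) (fun v => P 0 v u) (Fin.tail x)) := by
              refine tsum_congr fun u => ?_
              rw [tsum_mul_left, (hIH u).2, pad_zero]
              ring
          _ = rho (m + 2) P Q ν x := (rho_succ (m + 1) P Q ν x).symm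

lemma doeblinCoeff'_eq {Sb' : Type*} (pk : Sb' → Sb' → ℝ) :
    doeblinCoeff' pk = doeblinCoeff pk := rfl

end HMMAux


/-- Concentration of measure for hidden Markov processes: if the underlying Markov
chain has Doeblin contraction coefficients `θ_k ≤ θ < 1` and `f` is `1`-Lipschitz
with respect to the normalized Hamming metric, then
`Pr[|f(X) - E f(X)| > t] ≤ 2 exp(-n t² (1-θ)² / 2)`,
probability and expectation being taken with respect to the hidden Markov measure `ρ`. -/
theorem hmm_concentration {Sb S : Type*}
    [Countable Sb] [Countable S] [Inhabited Sb] [Inhabited S]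
    (n : ℕ) (hn : 2 ≤ n)
    (p0 : Sb → ℝ) (p : ℕ → Sb → Sb → ℝ) (q : ℕ → S → Sb → ℝ)
    (hp0 : ∀ v, 0 ≤ p0 v) (hp0sum : HasSum p0 1)
    (hp : ∀ k, 1 ≤ k → k ≤ n - 1 → ∀ u, (∀ v, 0 ≤ p k v u) ∧ HasSum (fun v => p k v u) 1)
    (hq : ∀ l, 1 ≤ l → l ≤ n → ∀ u, (∀ a, 0 ≤ q l a u) ∧ HasSum (fun a => q l a u) 1)
    (θ : ℝ) (hθ1 : θ < 1)
    (hθ : ∀ k, 1 ≤ k → k < n → doeblinCoeff (p k) ≤ θ)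
    (f : (Fin n → S) → ℝ)
    (hf : ∀ x x' : Fin n → S,
      |f x - f x'| ≤ ((Finset.univ.filter fun t : Fin n => x t ≠ x' t).card : ℝ) / n)
    (t : ℝ) (ht : 0 < t) :
    (∑' x : Fin n → S,
        if t < |f x - ∑' x' : Fin n → S, hmmMeasure n p0 p q x' * f x'|
          then hmmMeasure n p0 p q x else 0)
      ≤ 2 * Real.exp (-(n * t ^ 2 * (1 - θ) ^ 2) / 2) := by
  classical
  open HMMAux in
  obtain ⟨m, rfl⟩ : ∃ m, n = m + 2 := ⟨n - 2, by omega⟩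
  have hn0 : 0 < m + 2 := by omega
  have hn' : (0:ℝ) < ((m + 2 : ℕ) : ℝ) := by exact_mod_cast hn0
  -- totalized kernels
  set P : ℕ → Sb → Sb → ℝ := fun k v u =>
    if k + 1 ≤ m + 1 then p (k + 1) v u else (if v = default then 1 else 0) with hPdef
  set Q : ℕ → S → Sb → ℝ := fun l a u =>
    if l + 1 ≤ m + 2 then q (l + 1) a u else (if a = default then 1 else 0) with hQdef
  have hPK : IsKer P := by
    intro k u
    by_cases h : k + 1 ≤ m + 1
    · have hval := hp (k + 1) (by omega) (by omega) u
      have heq : (fun v => P k v u) = fun v => p (k + 1) v u := by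
        funext v; simp only [hPdef, if_pos h]
      constructor
      · intro v; rw [congrFun heq v]; exact hval.1 v
      · rw [heq]; exact hval.2
    · have heq : (fun v => P k v u) = fun v => if v = default then (1:ℝ) else 0 := by
        funext v; simp only [hPdef, if_neg h]
      constructor
      · intro v; rw [congrFun heq v]; by_cases hv : v = default <;> simp [hv]
      · rw [heq]; exact hasSum_ite_eq default 1
  have hQK : IsKer Q := by
    intro l u
    by_cases h : l + 1 ≤ m + 2
    · have hval := hq (l + 1) (by omega) (by omega) u
      have heq : (fun a => Q l a u) = fun a => q (l + 1) a u := by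
        funext a; simp only [hQdef, if_pos h]
      constructor
      · intro a; rw [congrFun heq a]; exact hval.1 a
      · rw [heq]; exact hval.2
    · have heq : (fun a => Q l a u) = fun a => if a = default then (1:ℝ) else 0 := by
        funext a; simp only [hQdef, if_neg h]
      constructor
      · intro a; rw [congrFun heq a]; by_cases ha : a = default <;> simp [ha]
      · rw [heq]; exact hasSum_ite_eq default 1
  have hprob : IsProb p0 := ⟨hp0, hp0sum⟩
  -- θ is nonnegative
  have hθ0 : 0 ≤ θ := by
    have h1 : doeblinCoeff (p 1) ≤ θ := hθ 1 le_rfl (by omega)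
    have h2 : 0 ≤ doeblinCoeff' (p 1) :=
      doeblin_nonneg' (fun u => ⟨(hp 1 le_rfl (by omega) u).1, (hp 1 le_rfl (by omega) u).2⟩)
    rw [doeblinCoeff'_eq] at h2
    linarith
  -- Doeblin bound for the totalized kernels
  have hdob : ∀ k, doeblinCoeff' (P k) ≤ θ := by
    intro k
    by_cases h : k + 1 ≤ m + 1
    · have heq : P k = p (k + 1) := by
        funext v u; simp only [hPdef, if_pos h]
      rw [heq, doeblinCoeff'_eq]
      exact hθ (k + 1) (by omega) (by omega)
    · have heq : P k = fun v (_ : Sb) => if v = default then (1:ℝ) else 0 := by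
        funext v u; simp only [hPdef, if_neg h]
      rw [heq, doeblin_const]
      exact hθ0
  have hLip : Lip (m + 2) f := hf
  -- bridge: hmmMeasure equals rho
  have hrhoeq : ∀ x : Fin (m + 2) → S, hmmMeasure (m + 2) p0 p q x = rho (m + 2) P Q p0 x := by
    intro x
    have hsummand : ∀ xb : Fin (m + 2) → Sb,
        markovMeasure (m + 2) p0 p xb * ∏ l ∈ Finset.range (m + 2), q (l + 1) (pad x l) (pad xb l)
        = (p0 (pad xb 0) * ∏ k ∈ Finset.range (m + 1), P k (pad xb (k + 1)) (pad xb k)) *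
            ∏ l ∈ Finset.range (m + 2), Q l (pad x l) (pad xb l) := by
      intro xb
      unfold markovMeasure
      have e1 : ∏ k ∈ Finset.range (m + 2 - 1), p (k + 1) (pad xb (k + 1)) (pad xb k)
          = ∏ k ∈ Finset.range (m + 1), P k (pad xb (k + 1)) (pad xb k) := by
        have : m + 2 - 1 = m + 1 := rfl
        rw [this]
        refine Finset.prod_congr rfl fun k hk => ?_
        have hk' : k + 1 ≤ m + 1 := by
          have := Finset.mem_range.1 hk; omega
        simp only [hPdef, if_pos hk']
      have e2 : ∏ l ∈ Finset.range (m + 2), q (l + 1) (pad x l) (pad xb l)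
          = ∏ l ∈ Finset.range (m + 2), Q l (pad x l) (pad xb l) := by
        refine Finset.prod_congr rfl fun l hl => ?_
        have hl' : l + 1 ≤ m + 2 := by
          have := Finset.mem_range.1 hl; omega
        simp only [hQdef, if_pos hl']
      rw [e1, e2]
    unfold hmmMeasure
    rw [tsum_congr hsummand]
    exact (bigsum_eq_rho (m + 1) P Q hPK hQK p0 hp0 hp0sum.summable x).2
  simp only [hrhoeq]
  -- abbreviations
  have hrsum : Summable (rho (m + 2) P Q p0) :=
    rho_summable (m + 2) hPK hQK hp0 hp0sum.summable
  have hrnn : ∀ x, 0 ≤ rho (m + 2) P Q p0 x :=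
    fun x => rho_nonneg (m + 2) P Q hPK hQK p0 hp0 x
  set C : ℝ := |f default| + ((m + 2 : ℕ) : ℝ) / ((m + 2 : ℕ) : ℝ) with hCdef
  have hC : ∀ x, |f x| ≤ C := by
    intro x
    rw [hCdef]
    exact lip_bounded hn0 hLip x
  have hC0 : 0 ≤ C := le_trans (abs_nonneg _) (hC default)
  set E : ℝ := Ex (m + 2) P Q p0 f with hEdef
  have hEb : |E| ≤ C := ex_abs_le (m + 2) hPK hQK hprob hC
  have hEt : (∑' x' : Fin (m + 2) → S, rho (m + 2) P Q p0 x' * f x') = E := rfl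
  rw [hEt]
  have h1θ : (0:ℝ) < 1 - θ := by linarith
  set c : ℝ := t * ((m + 2 : ℕ) : ℝ) * (1 - θ) ^ 2 with hcdef
  have hc0 : 0 < c := by rw [hcdef]; positivity
  -- the two mgf bounds
  have hmgf1 := mgf (m + 2) hn0 θ hθ0 hθ1 (m + 2) P Q hPK hQK hdob p0 hprob f hLip c
  have hmgf2 := mgf (m + 2) hn0 θ hθ0 hθ1 (m + 2) P Q hPK hQK hdob p0 hprob f hLip (-c)
  simp only [← hEdef] at hmgf1 hmgf2
  set BND : ℝ := Real.exp (c ^ 2 * ((m + 2 : ℕ) : ℝ) *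
    (1 / (((m + 2 : ℕ) : ℝ) * (1 - θ))) ^ 2 / 2) with hBNDdef
  have hmgf1' : ∑' x, rho (m + 2) P Q p0 x * Real.exp (c * (f x - E)) ≤ BND := by
    rw [hBNDdef]; exact hmgf1
  have hmgf2' : ∑' x, rho (m + 2) P Q p0 x * Real.exp (-c * (f x - E)) ≤ BND := by
    rw [hBNDdef]
    calc ∑' x, rho (m + 2) P Q p0 x * Real.exp (-c * (f x - E))
        ≤ Real.exp ((-c) ^ 2 * ((m + 2 : ℕ) : ℝ) *
            (1 / (((m + 2 : ℕ) : ℝ) * (1 - θ))) ^ 2 / 2) := hmgf2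
      _ = Real.exp (c ^ 2 * ((m + 2 : ℕ) : ℝ) *
            (1 / (((m + 2 : ℕ) : ℝ) * (1 - θ))) ^ 2 / 2) := by
          congr 1
          rw [neg_pow]
          norm_num
  -- summability of the exponential-weighted sums
  have hexple : ∀ (c' : ℝ) (x : Fin (m + 2) → S),
      Real.exp (c' * (f x - E)) ≤ Real.exp (|c'| * (2 * C)) := by
    intro c' x
    apply Real.exp_le_exp.2
    calc c' * (f x - E) ≤ |c' * (f x - E)| := le_abs_self _
      _ = |c'| * |f x - E| := abs_mul _ _
      _ ≤ |c'| * (2 * C) := by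
          apply mul_le_mul_of_nonneg_left _ (abs_nonneg c')
          calc |f x - E| ≤ |f x| + |E| := abs_sub _ _
            _ ≤ C + C := add_le_add (hC x) hEb
            _ = 2 * C := by ring
  have hsummexp : ∀ c' : ℝ,
      Summable fun x => rho (m + 2) P Q p0 x * Real.exp (c' * (f x - E)) := by
    intro c'
    apply Summable.of_nonneg_of_le
      (fun x => mul_nonneg (hrnn x) (Real.exp_pos _).le)
      (fun x => mul_le_mul_of_nonneg_left (hexple c' x) (hrnn x))
      (hrsum.mul_right _)
  have hsummexp' : Summable fun x => rho (m + 2) P Q p0 x * Real.exp (-c * (f x - E)) := by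
    have := hsummexp (-c)
    exact this.congr fun x => rfl
  -- pointwise indicator bound
  have hptwise : ∀ x : Fin (m + 2) → S,
      (if t < |f x - E| then rho (m + 2) P Q p0 x else 0)
      ≤ Real.exp (-(c * t)) * (rho (m + 2) P Q p0 x * Real.exp (c * (f x - E))
          + rho (m + 2) P Q p0 x * Real.exp (-c * (f x - E))) := by
    intro x
    by_cases hx : t < |f x - E|
    · rw [if_pos hx]
      have hsum_nonneg1 : 0 ≤ rho (m + 2) P Q p0 x * Real.exp (c * (f x - E)) :=
        mul_nonneg (hrnn x) (Real.exp_pos _).le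
      have hsum_nonneg2 : 0 ≤ rho (m + 2) P Q p0 x * Real.exp (-c * (f x - E)) :=
        mul_nonneg (hrnn x) (Real.exp_pos _).le
      rcases lt_abs.1 hx with h1 | h1
      · have key : (1:ℝ) ≤ Real.exp (-(c * t)) * Real.exp (c * (f x - E)) := by
          rw [← Real.exp_add]
          apply Real.one_le_exp
          nlinarith
        calc rho (m + 2) P Q p0 x = rho (m + 2) P Q p0 x * 1 := (mul_one _).symm
          _ ≤ rho (m + 2) P Q p0 x * (Real.exp (-(c * t)) * Real.exp (c * (f x - E))) :=
              mul_le_mul_of_nonneg_left key (hrnn x)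
          _ = Real.exp (-(c * t)) * (rho (m + 2) P Q p0 x * Real.exp (c * (f x - E))) := by
              ring
          _ ≤ Real.exp (-(c * t)) * (rho (m + 2) P Q p0 x * Real.exp (c * (f x - E))
              + rho (m + 2) P Q p0 x * Real.exp (-c * (f x - E))) :=
              mul_le_mul_of_nonneg_left (le_add_of_nonneg_right hsum_nonneg2)
                (Real.exp_pos _).le
      · have key : (1:ℝ) ≤ Real.exp (-(c * t)) * Real.exp (-c * (f x - E)) := by
          rw [← Real.exp_add]
          apply Real.one_le_exp
          nlinarith
        calc rho (m + 2) P Q p0 x = rho (m + 2) P Q p0 x * 1 := (mul_one _).symm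
          _ ≤ rho (m + 2) P Q p0 x * (Real.exp (-(c * t)) * Real.exp (-c * (f x - E))) :=
              mul_le_mul_of_nonneg_left key (hrnn x)
          _ = Real.exp (-(c * t)) * (rho (m + 2) P Q p0 x * Real.exp (-c * (f x - E))) := by
              ring
          _ ≤ Real.exp (-(c * t)) * (rho (m + 2) P Q p0 x * Real.exp (c * (f x - E))
              + rho (m + 2) P Q p0 x * Real.exp (-c * (f x - E))) := by
              apply mul_le_mul_of_nonneg_left _ (Real.exp_pos _).le
              linarith
    · rw [if_neg hx]
      exact mul_nonneg (Real.exp_pos _).le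
        (add_nonneg (mul_nonneg (hrnn x) (Real.exp_pos _).le)
          (mul_nonneg (hrnn x) (Real.exp_pos _).le))
  -- summabilities of the two sides
  have hs_ind : Summable fun x : Fin (m + 2) → S =>
      if t < |f x - E| then rho (m + 2) P Q p0 x else 0 := by
    apply Summable.of_nonneg_of_le _ _ hrsum
    · intro x; by_cases hx : t < |f x - E| <;> simp [hx, hrnn x]
    · intro x; by_cases hx : t < |f x - E| <;> simp [hx, hrnn x]
  have hs_rhs : Summable fun x : Fin (m + 2) → S =>
      Real.exp (-(c * t)) * (rho (m + 2) P Q p0 x * Real.exp (c * (f x - E))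
        + rho (m + 2) P Q p0 x * Real.exp (-c * (f x - E))) :=
    ((hsummexp c).add hsummexp').mul_left _
  -- put everything together
  calc ∑' x, (if t < |f x - E| then rho (m + 2) P Q p0 x else 0)
      ≤ ∑' x, Real.exp (-(c * t)) * (rho (m + 2) P Q p0 x * Real.exp (c * (f x - E))
          + rho (m + 2) P Q p0 x * Real.exp (-c * (f x - E))) :=
        Summable.tsum_le_tsum hptwise hs_ind hs_rhs
    _ = Real.exp (-(c * t)) * ((∑' x, rho (m + 2) P Q p0 x * Real.exp (c * (f x - E)))
          + ∑' x, rho (m + 2) P Q p0 x * Real.exp (-c * (f x - E))) := by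
        rw [tsum_mul_left, Summable.tsum_add (hsummexp c) hsummexp']
    _ ≤ Real.exp (-(c * t)) * (BND + BND) :=
        mul_le_mul_of_nonneg_left (add_le_add hmgf1' hmgf2') (Real.exp_pos _).le
    _ = 2 * (Real.exp (-(c * t)) * BND) := by ring
    _ = 2 * Real.exp (-(((m + 2 : ℕ) : ℝ) * t ^ 2 * (1 - θ) ^ 2) / 2) := by
        rw [hBNDdef, ← Real.exp_add]
        congr 1
        rw [hcdef]
        have hne1 : ((m + 2 : ℕ) : ℝ) ≠ 0 := ne_of_gt hn'
        have hne2 : (1 - θ) ≠ 0 := ne_of_gt h1θ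
        field_simp
        ring
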